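/- arXiv:1703.10636 — 9 statements merged into one kernel-verified Lean document; each statement's English description precedes it below -/
import Mathlib

section
/- Let C and D be cartesian categories and let L ⊣ R be an adjunction with L : D ⥤ C satisfying Frobenius reciprocity. Then the adjunction is an equivalence of categories (i.e., its unit and counit are isomorphisms) if and only if L sends the terminal object of D to a terminal object of C (L(1) ≅ 1) and, for every object W of D, the unit component η_W : W ⟶ R(L W) is a regular monomorphism. -/
/-!
If `L 1` is terminal, composing the Frobenius map at `W = 1` with the projection `L 1 ⨯ X ≅ X`
gives `ε_X ∘ L π₂`, where `π₂ : 1 ⨯ R X ≅ R X`; so the counit is invertible. Then `L η_W` is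
invertible by a triangle identity, so maps `R L W ⟶ R Y` are determined by their restriction along
`η_W`. If `η_W` is the equalizer of `u, v : R L W ⟶ Z` and `η_Z` is mono, this forces `u = v`, and
the equalizer of two equal maps is an isomorphism.
-/

open CategoryTheory Limits

universe v₁ v₂ v₃ u₁ u₂ u₃

/-- An adjunction `L ⊣ R` (with `L : D ⥤ C`) satisfies Frobenius reciprocity if the canonical
morphism `L (W ⨯ R X) ⟶ L W ⨯ X`, with components `L π₁` and `ε_X ∘ L π₂`, is an isomorphism
for all objects `W` of `D` and `X` of `C`. -/
def FrobeniusReciprocity {D : Type u₁} [Category.{v₁} D] {C : Type u₂} [Category.{v₂} C]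
    [HasFiniteLimits C] [HasFiniteLimits D]
    {L : D ⥤ C} {R : C ⥤ D} (adj : L ⊣ R) : Prop :=
  ∀ (W : D) (X : C),
    IsIso (prod.lift (L.map (prod.fst : W ⨯ R.obj X ⟶ W))
      (L.map (prod.snd : W ⨯ R.obj X ⟶ R.obj X) ≫ adj.counit.app X))

namespace CategoryTheory

lemma Limits.isIso_prod_snd_of_isTerminal {C : Type u₁} [Category.{v₁} C] {T X : C}
    (hT : IsTerminal T) [HasBinaryProduct T X] : IsIso (prod.snd : T ⨯ X ⟶ X) :=
  (BinaryFan.isLimit_iff_isIso_snd hT _).mp ⟨limit.isLimit _⟩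

namespace Adjunction

variable {D : Type u₁} [Category.{v₁} D] {C : Type u₂} [Category.{v₂} C]
  {L : D ⥤ C} {R : C ⥤ D} (adj : L ⊣ R)

lemma isIso_counit_of_frobeniusReciprocity [HasFiniteLimits C] [HasFiniteLimits D]
    (frob : FrobeniusReciprocity adj) {T : D} (hT : IsTerminal T) (hLT : IsTerminal (L.obj T)) :
    IsIso adj.counit := by
  suffices ∀ X, IsIso (adj.counit.app X) from NatIso.isIso_of_isIso_app _
  intro X
  have := isIso_prod_snd_of_isTerminal hT (X := R.obj X)
  have : IsIso (L.map (prod.snd : T ⨯ R.obj X ⟶ R.obj X) ≫ adj.counit.app X) := by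
    rw [← prod.lift_snd (L.map prod.fst) (L.map prod.snd ≫ adj.counit.app X)]
    exact IsIso.comp_isIso' (frob T X) (isIso_prod_snd_of_isTerminal hLT)
  exact IsIso.of_isIso_comp_left (L.map (prod.snd : T ⨯ R.obj X ⟶ R.obj X)) _

lemma unit_app_cancel_of_isIso_counit [IsIso adj.counit] {W : D} {Y : C}
    {f g : R.obj (L.obj W) ⟶ R.obj Y} (h : adj.unit.app W ≫ f = adj.unit.app W ≫ g) :
    f = g := by
  have := isIso_of_comp_hom_eq_id _ (adj.left_triangle_components W)
  apply (adj.homEquiv _ _).symm.injective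
  rw [← cancel_epi (L.map (adj.unit.app W))]
  have h' := congrArg (adj.homEquiv W Y).symm h
  rw [adj.homEquiv_naturality_left_symm, adj.homEquiv_naturality_left_symm] at h'
  exact h'

lemma isIso_unit_app_of_regularMono [IsIso adj.counit] {W : D}
    (hW : RegularMono (adj.unit.app W)) [Mono (adj.unit.app hW.Z)] :
    IsIso (adj.unit.app W) := by
  have hleft_eq_right : hW.left = hW.right := by
    rw [← cancel_mono (adj.unit.app hW.Z)]
    refine adj.unit_app_cancel_of_isIso_counit ?_
    simpa only [Functor.id_obj, Functor.comp_obj, Category.assoc] using hW.w =≫ adj.unit.app hW.Z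
  exact isIso_limit_cone_parallelPair_of_eq hleft_eq_right hW.isLimit

end Adjunction

end CategoryTheory

/-- A Frobenius adjunction is an equivalence (its unit and counit are isomorphisms) iff `L`
sends the terminal object to a terminal object and every unit component is a regular
monomorphism. -/
theorem frobenius_adjunction_isEquivalence_iff
    {D : Type u₁} [Category.{v₁} D] {C : Type u₂} [Category.{v₂} C]
    [HasFiniteLimits C] [HasFiniteLimits D]
    {L : D ⥤ C} {R : C ⥤ D} (adj : L ⊣ R) (frob : FrobeniusReciprocity adj) :
    (IsIso adj.unit ∧ IsIso adj.counit) ↔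
      (Nonempty (IsTerminal (L.obj (⊤_ D))) ∧
        ∀ W : D, Nonempty (RegularMono (adj.unit.app W))) := by
  constructor
  · rintro ⟨_, _⟩
    have : L.IsEquivalence := adj.toEquivalence.isEquivalence_functor
    exact ⟨⟨terminalIsTerminal.isTerminalObj L _⟩,
      fun W => ⟨RegularMono.ofIso (asIso (adj.unit.app W))⟩⟩
  · rintro ⟨⟨hT⟩, hreg⟩
    have hcounit := adj.isIso_counit_of_frobeniusReciprocity frob terminalIsTerminal hT
    have (W : D) : Mono (adj.unit.app W) := (hreg W).some.mono
    have (W : D) : IsIso (adj.unit.app W) := adj.isIso_unit_app_of_regularMono (hreg W).some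
    exact ⟨NatIso.isIso_of_isIso_app _, hcounit⟩
end

section
/- Let C and D be cartesian categories, let Σ_D ⊣ D* be an adjunction with Σ_D : D ⥤ C, and let L ⊣ R be an adjunction with L : C ⥤ D such that there is a natural isomorphism Σ_D ∘ L ≅ Id_C. If L ⊣ R is Frobenius at the object L(1) of D (where 1 is the terminal object of C), then the functor C ⥤ D/L(1) sending an object X to the object of the slice given by L(!_X) : L X ⟶ L(1) (where !_X : X ⟶ 1 is the unique morphism to the terminal object), and a morphism h to L h, is an equivalence of categories. -/
open CategoryTheory Limits

universe v₁ v₂ v₃ u₁ u₂ u₃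

/-- An adjunction `L ⊣ R` (with `L : E ⥤ D`) is Frobenius at an object `X` of `D` if for every
`g : W ⟶ R X` and `f : Y ⟶ X` the canonical morphism `L (W ×_{R X} R Y) ⟶ L W ×_X Y`, with
components `L π₁` and `ε_Y ∘ L π₂`, into the pullback of `f` along the adjoint transpose
`ε_X ∘ L g` of `g`, is an isomorphism. -/
def FrobeniusAt {E : Type u₁} [Category.{v₁} E] {D : Type u₂} [Category.{v₂} D]
    [HasFiniteLimits E] [HasFiniteLimits D]
    {L : E ⥤ D} {R : D ⥤ E} (adj : L ⊣ R) (X : D) : Prop :=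
  ∀ (W : E) (g : W ⟶ R.obj X) (Y : D) (f : Y ⟶ X),
    IsIso (pullback.lift (L.map (pullback.fst g (R.map f)))
      (L.map (pullback.snd g (R.map f)) ≫ adj.counit.app Y)
      (by rw [← L.map_comp_assoc, pullback.condition, L.map_comp_assoc]; simp) :
      L.obj (pullback g (R.map f)) ⟶ pullback (L.map g ≫ adj.counit.app X) f)

/-- The functor `C ⥤ D/L(1)` sending an object `X` to `L(!_X) : L X ⟶ L 1` and a morphism `h`
to `L h`. -/
noncomputable def sliceFunctor {C : Type u₁} [Category.{v₁} C] {D : Type u₂} [Category.{v₂} D]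
    [HasTerminal C] (L : C ⥤ D) : C ⥤ Over (L.obj (⊤_ C)) where
  obj X := Over.mk (L.map (terminal.from X))
  map {X Y} h := Over.homMk (L.map h)
    (by dsimp; rw [← L.map_comp, terminal.comp_from])

/-!
Up to the equivalence `C ≌ C/1`, the functor is `Over.post L : C/1 ⥤ D/L(1)`, whose right adjoint
sends `f : Y ⟶ L 1` to `1 ×_{R L 1} R Y`. The transpose of the unit `η_1` is the identity, so
Frobenius at `L 1` applied to `g = η_1` says precisely that the counit of this adjunction is an
isomorphism. The splitting `L ⋙ Σ_D ≅ 𝟭 C` makes `L`, hence `Over.post L`, reflect isomorphisms,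
and a left adjoint that reflects isomorphisms and has invertible counit is an equivalence.
-/

namespace CategoryTheory

variable {C : Type u₁} [Category.{v₁} C] {D : Type u₂} [Category.{v₂} D]

lemma Functor.reflectsIsomorphisms_of_comp_iso_id {L : C ⥤ D} {S : D ⥤ C} (e : L ⋙ S ≅ 𝟭 C) :
    L.ReflectsIsomorphisms :=
  have := reflectsIsomorphisms_of_iso e.symm
  reflectsIsomorphisms_of_comp L S

lemma Adjunction.isEquivalence_left_of_isIso_counit {L : C ⥤ D} {R : D ⥤ C} (adj : L ⊣ R)
    [L.ReflectsIsomorphisms] [IsIso adj.counit] : L.IsEquivalence := by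
  have := adj.fullyFaithfulROfIsIsoCounit.full
  have := adj.fullyFaithfulROfIsIsoCounit.faithful
  -- with `R` fully faithful, `L.map (adj.unit.app X)` is inverse to an invertible counit component
  have (X : C) : IsIso (adj.unit.app X) := isIso_of_reflects_iso _ L
  exact adj.toEquivalence.isEquivalence_functor

instance Over.reflectsIsomorphisms_post {X : C} (F : C ⥤ D) [F.ReflectsIsomorphisms] :
    (Over.post (X := X) F).ReflectsIsomorphisms :=
  have : (Over.post (X := X) F ⋙ Over.forget (F.obj X)).ReflectsIsomorphisms :=
    inferInstanceAs (Over.forget X ⋙ F).ReflectsIsomorphisms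
  reflectsIsomorphisms_of_comp _ (Over.forget _)

noncomputable def sliceFunctorIsoPost [HasTerminal C] (L : C ⥤ D) :
    sliceFunctor L ≅ (Over.equivalenceOfIsTerminal terminalIsTerminal).inverse ⋙ Over.post L :=
  Iso.refl _

variable [HasFiniteLimits C] [HasFiniteLimits D] {L : C ⥤ D} {R : D ⥤ C} {adj : L ⊣ R}

/-- The morphism is the Frobenius comparison map followed by the projection
`L W ×_X Y ⟶ Y`, which is invertible as a pullback of the invertible transpose of `g`. -/
lemma FrobeniusAt.isIso_map_fst_comp_counit {X : D} (frob : FrobeniusAt adj X) {W : C}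
    (g : W ⟶ R.obj X) [IsIso (L.map g ≫ adj.counit.app X)] {Y : D} (f : Y ⟶ X) :
    IsIso (L.map (pullback.fst (R.map f) g) ≫ adj.counit.app Y) := by
  have := frob W g Y f
  rw [← pullbackSymmetry_hom_comp_snd, L.map_comp, Category.assoc,
    ← pullback.lift_snd (f := L.map g ≫ adj.counit.app X) (g := f)
    (L.map (pullback.fst g (R.map f))) (L.map (pullback.snd g (R.map f)) ≫ adj.counit.app Y)
    (by rw [← L.map_comp_assoc, pullback.condition, L.map_comp_assoc]; simp)]
  infer_instance

lemma FrobeniusAt.isIso_postAdjunctionLeft_counit {T : C} (frob : FrobeniusAt adj (L.obj T)) :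
    IsIso (Over.postAdjunctionLeft adj (X := T)).counit := by
  have : IsIso (L.map (adj.unit.app T) ≫ adj.counit.app (L.obj T)) := by
    rw [adj.left_triangle_components T]
    exact IsIso.id _
  rw [NatTrans.isIso_iff_isIso_app]
  intro A
  have : IsIso ((Over.forget _).map ((Over.postAdjunctionLeft adj).counit.app A)) := by
    simp only [Over.forget_map, Over.postAdjunctionLeft_counit_app_left]
    exact frob.isIso_map_fst_comp_counit (adj.unit.app T) A.hom
  exact isIso_of_reflects_iso _ (Over.forget _)

end CategoryTheory

theorem sliceFunctor_isEquivalence_of_split_of_frobeniusAt_general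
    {C : Type u₁} [Category.{v₁} C] {D : Type u₂} [Category.{v₂} D]
    [HasFiniteLimits C] [HasFiniteLimits D]
    {SigD : D ⥤ C}
    {L : C ⥤ D} {R : D ⥤ C} (adj : L ⊣ R)
    (splitting : L ⋙ SigD ≅ 𝟭 C)
    (frob : FrobeniusAt adj (L.obj (⊤_ C))) :
    (sliceFunctor L).IsEquivalence := by
  have := Functor.reflectsIsomorphisms_of_comp_iso_id splitting
  have := frob.isIso_postAdjunctionLeft_counit
  have := (Over.postAdjunctionLeft adj (X := ⊤_ C)).isEquivalence_left_of_isIso_counit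
  exact Functor.isEquivalence_of_iso (sliceFunctorIsoPost L).symm

/-- If `L ⊣ R` (with `L : C ⥤ D`) is split by the adjunction `Σ_D ⊣ D*` (i.e. `Σ_D ∘ L ≅ Id_C`)
and is Frobenius at `L(1)`, then the canonical functor `C ⥤ D/L(1)` is an equivalence. -/
theorem sliceFunctor_isEquivalence_of_split_of_frobeniusAt
    {C : Type u₁} [Category.{v₁} C] {D : Type u₂} [Category.{v₂} D]
    [HasFiniteLimits C] [HasFiniteLimits D]
    {SigD : D ⥤ C} {Dstar : C ⥤ D} (adjD : SigD ⊣ Dstar)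
    {L : C ⥤ D} {R : D ⥤ C} (adj : L ⊣ R)
    (splitting : L ⋙ SigD ≅ 𝟭 C)
    (frob : FrobeniusAt adj (L.obj (⊤_ C))) :
    (sliceFunctor L).IsEquivalence :=
  sliceFunctor_isEquivalence_of_split_of_frobeniusAt_general adj splitting frob
end

section
/- Let C and D be cartesian categories, let Σ_D ⊣ D* be an adjunction with Σ_D : D ⥤ C, let X be an object of C, and let L ⊣ R be an adjunction with L : C/X ⥤ D that is over C, i.e., there is a natural isomorphism Σ_D ∘ L ≅ Σ_X where Σ_X : C/X ⥤ C is the forgetful (domain) functor. If L ⊣ R is Frobenius at the object D*(X) of D, then the functor C/X ⥤ D/L(1) sending an object A of the slice C/X to L(!_A) : L A ⟶ L(1) (where 1 = (X, id_X) is the terminal object of C/X and !_A the unique morphism to it) is an equivalence of categories. -/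
open CategoryTheory Limits

universe v₁ v₂ v₃ u₁ u₂ u₃

/-!
Write `T = L 1` and let `k : T ⟶ D* X` be the transpose of the point of `R D* X` that corresponds
to `𝟙 X` under the composite adjunction `Σ_X ≅ Σ_D ∘ L ⊣ R ∘ D*`. Every `A` over `X` is the
pullback of `R D* A` along that point, so the Frobenius condition at `D* X` gives
`L A ≅ T ×_{D* X} D* A`, naturally in `A`. Consequently maps from `b : B ⟶ T` to `L(!_W)` over `T`
correspond to maps from `Σ_D B` (over `X` through the transpose of `b ≫ k`) to `W` over `X`: the
slice functor has a left adjoint, and its counit is the given `Σ_D ∘ L ≅ Σ_X`, hence invertible.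
The unit at `b` has a retraction: the Frobenius isomorphism at `b ≫ k` splits `ε ∘ L π₂`, and the
one at `k` itself shows that this splitting lies over `T`. A unit component with a retraction is
invertible as soon as the right adjoint is full.
-/

namespace CategoryTheory.Adjunction

section Forget

variable {C : Type u₁} [Category.{v₁} C] {X : C} {G : C ⥤ Over X} (adj : Over.forget X ⊣ G)

/-- `adj.homEquiv` with source `A.left ⟶ Z`: `(Over.forget X).obj A` is only semireducibly
`A.left`, so the library's lemmas about `adj.homEquiv` do not rewrite terms built from `A.left`. -/
def forgetHomEquiv (A : Over X) (Z : C) : (A.left ⟶ Z) ≃ (A ⟶ G.obj Z) := adj.homEquiv A Z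

lemma forgetHomEquiv_naturality_left {A B : Over X} {Z : C} (t : A ⟶ B) (f : B.left ⟶ Z) :
    adj.forgetHomEquiv A Z (t.left ≫ f) = t ≫ adj.forgetHomEquiv B Z f :=
  adj.homEquiv_naturality_left t f

lemma forgetHomEquiv_naturality_right {A : Over X} {Z Z' : C} (f : A.left ⟶ Z) (g : Z ⟶ Z') :
    adj.forgetHomEquiv A Z' (f ≫ g) = adj.forgetHomEquiv A Z f ≫ G.map g :=
  adj.homEquiv_naturality_right f g

lemma forgetHomEquiv_symm_comp_eq_hom {W T : Over X} {Z : C} (q : W ⟶ G.obj Z) (p : Z ⟶ X)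
    (a : W ⟶ T) (h : q ≫ G.map p = a ≫ adj.forgetHomEquiv _ _ T.hom) :
    (adj.forgetHomEquiv _ _).symm q ≫ p = W.hom := by
  rw [← Equiv.apply_eq_iff_eq (adj.forgetHomEquiv _ _), forgetHomEquiv_naturality_right,
    Equiv.apply_symm_apply, h, ← forgetHomEquiv_naturality_left, Over.w]

variable [HasPullbacks C]

noncomputable def isoPullbackOfForget (A : Over X) :
    A ≅ pullback (adj.forgetHomEquiv _ _ (⊤_ (Over X)).hom) (G.map A.hom) where
  hom := pullback.lift (terminal.from A) (adj.forgetHomEquiv _ _ (𝟙 A.left)) (by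
    rw [← forgetHomEquiv_naturality_left, ← forgetHomEquiv_naturality_right, Over.w,
      Category.id_comp])
  inv := Over.homMk ((adj.forgetHomEquiv _ _).symm (pullback.snd _ _))
    (adj.forgetHomEquiv_symm_comp_eq_hom _ _ _ pullback.condition.symm)
  hom_inv_id := by
    ext
    simp only [Over.comp_left, Over.homMk_left, Over.id_left]
    rw [← Equiv.apply_eq_iff_eq (adj.forgetHomEquiv _ _), forgetHomEquiv_naturality_left,
      Equiv.apply_symm_apply, pullback.lift_snd]
  inv_hom_id := by
    apply pullback.hom_ext
    · exact terminal.hom_ext _ _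
    · rw [Category.assoc, pullback.lift_snd, ← forgetHomEquiv_naturality_left, Category.comp_id]
      simp only [Over.homMk_left, Equiv.apply_symm_apply, Category.id_comp]

lemma isoPullbackOfForget_hom_snd (A : Over X) :
    (adj.isoPullbackOfForget A).hom ≫ pullback.snd _ _ = adj.forgetHomEquiv _ _ (𝟙 A.left) :=
  pullback.lift_snd (f := adj.forgetHomEquiv _ _ (⊤_ (Over X)).hom) _ _ _

end Forget

lemma isIso_unit_app_of_retraction {C : Type u₁} [Category.{v₁} C] {D : Type u₂}
    [Category.{v₂} D] {F : C ⥤ D} {G : D ⥤ C} (adj : F ⊣ G) [G.Full] {B : C}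
    (r : G.obj (F.obj B) ⟶ B) (hr : adj.unit.app B ≫ r = 𝟙 B) : IsIso (adj.unit.app B) := by
  obtain ⟨v, hv⟩ := G.map_surjective (r ≫ adj.unit.app B)
  have hv_id : v = 𝟙 _ := (adj.homEquiv _ _).injective <| by
    rw [homEquiv_unit, hv, reassoc_of% hr, homEquiv_id]
  exact ⟨r, hr, by rw [← hv, hv_id, G.map_id]; rfl⟩

end CategoryTheory.Adjunction

namespace FrobeniusAt

variable {E : Type u₁} [Category.{v₁} E] {D : Type u₂} [Category.{v₂} D]
  [HasFiniteLimits E] [HasFiniteLimits D] {L : E ⥤ D} {R : D ⥤ E} {adj : L ⊣ R} {Z : D}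
  (h : FrobeniusAt adj Z) {W : E} (g : W ⟶ R.obj Z) {Y : D} (f : Y ⟶ Z)

noncomputable def iso : L.obj (pullback g (R.map f)) ≅ pullback (L.map g ≫ adj.counit.app Z) f :=
  @asIso _ _ _ _ _ (h W g Y f)

lemma iso_hom_fst : (h.iso g f).hom ≫ pullback.fst _ _ = L.map (pullback.fst _ _) :=
  pullback.lift_fst _ _ _

lemma iso_hom_snd :
    (h.iso g f).hom ≫ pullback.snd _ _ = L.map (pullback.snd _ _) ≫ adj.counit.app Y :=
  pullback.lift_snd _ _ _

lemma iso_inv_map_fst : (h.iso g f).inv ≫ L.map (pullback.fst _ _) = pullback.fst _ _ := by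
  rw [Iso.inv_comp_eq, iso_hom_fst]

lemma iso_inv_map_snd :
    (h.iso g f).inv ≫ L.map (pullback.snd _ _) ≫ adj.counit.app Y = pullback.snd _ _ := by
  rw [Iso.inv_comp_eq, iso_hom_snd]
  rfl

include h in
lemma hom_ext {V : D} {a b : V ⟶ L.obj (pullback g (R.map f))}
    (hfst : a ≫ L.map (pullback.fst _ _) = b ≫ L.map (pullback.fst _ _))
    (hsnd : a ≫ L.map (pullback.snd _ _) ≫ adj.counit.app Y =
      b ≫ L.map (pullback.snd _ _) ≫ adj.counit.app Y) : a = b := by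
  rw [← cancel_mono (h.iso g f).hom]
  apply pullback.hom_ext <;>
    simpa only [Category.assoc, iso_hom_fst, iso_hom_snd, Functor.id_obj]

end FrobeniusAt

namespace AdjunctionOver

variable {C : Type u₁} [Category.{v₁} C] {D : Type u₂} [Category.{v₂} D]
  {SigD : D ⥤ C} {Dstar : C ⥤ D} (adjD : SigD ⊣ Dstar) {X : C}
  {L : Over X ⥤ D} {R : D ⥤ Over X} (adj : L ⊣ R) (hover : L ⋙ SigD ≅ Over.forget X)

noncomputable def forgetAdj : Over.forget X ⊣ Dstar ⋙ R := (adj.comp adjD).ofNatIsoLeft hover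

noncomputable def toDstar (A : Over X) : L.obj A ⟶ Dstar.obj A.left :=
  (adj.homEquiv _ _).symm ((forgetAdj adjD adj hover).forgetHomEquiv _ _ (𝟙 A.left))

lemma homEquiv_symm_toDstar (A : Over X) :
    (adjD.homEquiv _ _).symm (toDstar adjD adj hover A) = hover.hom.app A := by
  rw [toDstar, Adjunction.forgetHomEquiv, forgetAdj]
  erw [Adjunction.homEquiv_ofNatIsoLeft_apply, Adjunction.comp_homEquiv]
  simp only [Equiv.trans_apply, Equiv.symm_apply_apply]
  exact Category.comp_id _

lemma map_comp_toDstar {A B : Over X} (t : A ⟶ B) :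
    L.map t ≫ toDstar adjD adj hover B = toDstar adjD adj hover A ≫ Dstar.map t.left := by
  rw [toDstar, toDstar, ← Adjunction.homEquiv_naturality_left_symm,
    ← Adjunction.forgetHomEquiv_naturality_left, ← Adjunction.homEquiv_naturality_right_symm,
    ← Functor.comp_map, ← Adjunction.forgetHomEquiv_naturality_right, Category.comp_id,
    Category.id_comp]

/- `abbrev`s, so that `FrobeniusAt.iso` at `point` lands in `pullback comparison _` up to
reducible unfolding. -/
noncomputable abbrev point : ⊤_ (Over X) ⟶ R.obj (Dstar.obj X) :=
  (forgetAdj adjD adj hover).forgetHomEquiv _ _ (⊤_ (Over X)).hom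

noncomputable abbrev comparison : L.obj (⊤_ (Over X)) ⟶ Dstar.obj X :=
  L.map (point adjD adj hover) ≫ adj.counit.app _

lemma map_terminal_from_comp_comparison (A : Over X) :
    L.map (terminal.from A) ≫ comparison adjD adj hover =
      toDstar adjD adj hover A ≫ Dstar.map A.hom := by
  rw [comparison, ← Adjunction.homEquiv_counit, point, ← Adjunction.homEquiv_naturality_left_symm,
    ← Adjunction.forgetHomEquiv_naturality_left, Over.w, toDstar,
    ← Adjunction.homEquiv_naturality_right_symm, ← Functor.comp_map,
    ← Adjunction.forgetHomEquiv_naturality_right, Category.id_comp]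

/-- A structure literal rather than `Over.mk`, so that `left` is reducibly `SigD.obj B.left`. -/
noncomputable abbrev sliceLeftAdjointObj (B : Over (L.obj (⊤_ (Over X)))) : Over X where
  left := SigD.obj B.left
  right := ⟨⟨⟩⟩
  hom := (adjD.homEquiv _ _).symm (B.hom ≫ comparison adjD adj hover)

noncomputable def liftHom {B : Over (L.obj (⊤_ (Over X)))} {W : Over X} (u : B.left ⟶ L.obj W)
    (hu : u ≫ L.map (terminal.from W) = B.hom) : sliceLeftAdjointObj adjD adj hover B ⟶ W :=
  Over.homMk ((adjD.homEquiv _ _).symm (u ≫ toDstar adjD adj hover W)) (by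
    rw [← Adjunction.homEquiv_naturality_right_symm, Category.assoc,
      ← map_terminal_from_comp_comparison, ← Category.assoc, hu]
    rfl)

lemma liftHom_comp {B : Over (L.obj (⊤_ (Over X)))} {W W' : Over X} (u : B.left ⟶ L.obj W)
    (hu : u ≫ L.map (terminal.from W) = B.hom) (v : W ⟶ W')
    (huv : (u ≫ L.map v) ≫ L.map (terminal.from W') = B.hom) :
    liftHom adjD adj hover (u ≫ L.map v) huv = liftHom adjD adj hover u hu ≫ v := by
  ext
  simp only [liftHom, Over.comp_left, Over.homMk_left]
  rw [Category.assoc, map_comp_toDstar, ← Category.assoc,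
    Adjunction.homEquiv_naturality_right_symm]

variable [HasFiniteLimits C] [HasFiniteLimits D] {adj} (frob : FrobeniusAt adj (Dstar.obj X))

noncomputable def pullbackIso (A : Over X) :
    L.obj A ≅ pullback (comparison adjD adj hover) (Dstar.map A.hom) :=
  L.mapIso ((forgetAdj adjD adj hover).isoPullbackOfForget A) ≪≫
    frob.iso (point adjD adj hover) (Dstar.map A.hom)

lemma pullbackIso_hom_fst (A : Over X) :
    (pullbackIso adjD hover frob A).hom ≫ pullback.fst _ _ = L.map (terminal.from A) := by
  rw [pullbackIso, Iso.trans_hom, Category.assoc, FrobeniusAt.iso_hom_fst, Functor.mapIso_hom,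
    ← L.map_comp]
  congr 1
  exact terminal.hom_ext _ _

lemma pullbackIso_hom_snd (A : Over X) :
    (pullbackIso adjD hover frob A).hom ≫ pullback.snd _ _ = toDstar adjD adj hover A := by
  rw [pullbackIso, Iso.trans_hom, Category.assoc, FrobeniusAt.iso_hom_snd, Functor.mapIso_hom,
    ← L.map_comp_assoc]
  erw [Adjunction.isoPullbackOfForget_hom_snd]
  rw [← Adjunction.homEquiv_counit]
  rfl

include frob in
lemma hom_ext {A : Over X} {V : D} {a b : V ⟶ L.obj A}
    (hfst : a ≫ L.map (terminal.from A) = b ≫ L.map (terminal.from A))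
    (hsnd : a ≫ toDstar adjD adj hover A = b ≫ toDstar adjD adj hover A) : a = b := by
  rw [← cancel_mono (pullbackIso adjD hover frob A).hom]
  apply pullback.hom_ext <;>
    simpa only [Category.assoc, pullbackIso_hom_fst, pullbackIso_hom_snd]

variable (B : Over (L.obj (⊤_ (Over X))))

noncomputable def unitLeft : B.left ⟶ L.obj (sliceLeftAdjointObj adjD adj hover B) :=
  pullback.lift (f := comparison adjD adj hover)
      (g := Dstar.map (sliceLeftAdjointObj adjD adj hover B).hom) B.hom (adjD.unit.app B.left)
      (by rw [← Adjunction.homEquiv_unit]; exact (Equiv.apply_symm_apply _ _).symm) ≫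
    (pullbackIso adjD hover frob _).inv

lemma unitLeft_comp_map_terminal_from :
    unitLeft adjD hover frob B ≫ L.map (terminal.from _) = B.hom := by
  rw [unitLeft, Category.assoc, ← pullbackIso_hom_fst adjD hover frob, Iso.inv_hom_id_assoc,
    pullback.lift_fst]

lemma unitLeft_comp_toDstar :
    unitLeft adjD hover frob B ≫ toDstar adjD adj hover _ = adjD.unit.app B.left := by
  rw [unitLeft, Category.assoc, ← pullbackIso_hom_snd adjD hover frob, Iso.inv_hom_id_assoc,
    pullback.lift_snd]

variable {B}

lemma unitLeft_comp_map_comp_terminal_from {W : Over X}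
    (v : sliceLeftAdjointObj adjD adj hover B ⟶ W) :
    (unitLeft adjD hover frob B ≫ L.map v) ≫ L.map (terminal.from W) = B.hom := by
  rw [Category.assoc, ← L.map_comp, terminal.comp_from, unitLeft_comp_map_terminal_from]

lemma unitLeft_comp_map_liftHom {W : Over X} (u : B.left ⟶ L.obj W)
    (hu : u ≫ L.map (terminal.from W) = B.hom) :
    unitLeft adjD hover frob B ≫ L.map (liftHom adjD adj hover u hu) = u := by
  apply hom_ext adjD hover frob
  · rw [Category.assoc, ← L.map_comp, terminal.comp_from, unitLeft_comp_map_terminal_from, hu]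
  · rw [Category.assoc, map_comp_toDstar, reassoc_of% unitLeft_comp_toDstar,
      ← Adjunction.homEquiv_unit]
    simp only [liftHom, Over.homMk_left, Equiv.apply_symm_apply]

lemma liftHom_unitLeft_comp {W : Over X} (v : sliceLeftAdjointObj adjD adj hover B ⟶ W) :
    liftHom adjD adj hover (unitLeft adjD hover frob B ≫ L.map v)
      (unitLeft_comp_map_comp_terminal_from adjD hover frob v) = v := by
  ext
  simp only [liftHom, Over.homMk_left]
  rw [Category.assoc, map_comp_toDstar, reassoc_of% unitLeft_comp_toDstar,
    ← Adjunction.homEquiv_unit, Equiv.symm_apply_apply]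

variable (B) in
noncomputable def sliceHomEquiv (W : Over X) :
    (sliceLeftAdjointObj adjD adj hover B ⟶ W) ≃ (B ⟶ (sliceFunctor L).obj W) where
  toFun v := Over.homMk (unitLeft adjD hover frob B ≫ L.map v)
    (unitLeft_comp_map_comp_terminal_from adjD hover frob v)
  invFun g := liftHom adjD adj hover g.left (Over.w g)
  left_inv v := liftHom_unitLeft_comp adjD hover frob v
  right_inv g := by
    ext
    exact unitLeft_comp_map_liftHom adjD hover frob _ _

lemma sliceHomEquiv_comp {W W' : Over X} (v : sliceLeftAdjointObj adjD adj hover B ⟶ W)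
    (w : W ⟶ W') :
    sliceHomEquiv adjD hover frob B W' (v ≫ w) =
      sliceHomEquiv adjD hover frob B W v ≫ (sliceFunctor L).map w := by
  ext
  exact (unitLeft adjD hover frob B ≫= L.map_comp v w).trans (Category.assoc _ _ _).symm

noncomputable def sliceAdjunction :
    Adjunction.leftAdjointOfEquiv (sliceHomEquiv adjD hover frob)
      (fun _ _ _ w v ↦ sliceHomEquiv_comp adjD hover frob v w) ⊣ sliceFunctor L :=
  Adjunction.adjunctionOfEquivLeft _ _

lemma sliceAdjunction_counit_app_left (W : Over X) :
    ((sliceAdjunction adjD hover frob).counit.app W).left = hover.hom.app W := by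
  simp only [sliceAdjunction, Adjunction.adjunctionOfEquivLeft_counit_app, sliceHomEquiv,
    Equiv.coe_fn_symm_mk, liftHom, Over.homMk_left]
  exact (congrArg _ (Category.id_comp _)).trans (homEquiv_symm_toDstar adjD adj hover W)

lemma isIso_sliceAdjunction_counit_app (W : Over X) :
    IsIso ((sliceAdjunction adjD hover frob).counit.app W) := by
  have : IsIso ((Over.forget X).map ((sliceAdjunction adjD hover frob).counit.app W)) := by
    rw [Over.forget_map, sliceAdjunction_counit_app_left]
    exact (hover.app W).isIso_hom
  exact isIso_of_reflects_iso _ (Over.forget X)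

lemma sliceAdjunction_unit_app_left (B : Over (L.obj (⊤_ (Over X)))) :
    ((sliceAdjunction adjD hover frob).unit.app B).left = unitLeft adjD hover frob B := by
  simp only [sliceAdjunction, Adjunction.adjunctionOfEquivLeft_unit_app, sliceHomEquiv]
  exact (unitLeft adjD hover frob B ≫= L.map_id _).trans (Category.comp_id _)

variable (B : Over (L.obj (⊤_ (Over X))))

noncomputable def frobeniusSection :
    B.left ⟶ L.obj (pullback (point adjD adj hover) (R.map (B.hom ≫ comparison adjD adj hover))) :=
  pullback.lift (f := comparison adjD adj hover) B.hom (𝟙 B.left) (Category.id_comp _).symm ≫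
    (frob.iso _ _).inv

lemma frobeniusSection_comp_map_fst :
    frobeniusSection adjD hover frob B ≫ L.map (pullback.fst _ _) = B.hom := by
  rw [frobeniusSection, Category.assoc, FrobeniusAt.iso_inv_map_fst, pullback.lift_fst]

lemma frobeniusSection_comp_map_snd :
    frobeniusSection adjD hover frob B ≫ L.map (pullback.snd _ _) ≫ adj.counit.app B.left =
      𝟙 B.left := by
  rw [frobeniusSection, Category.assoc, FrobeniusAt.iso_inv_map_snd, pullback.lift_snd]

lemma frobeniusSection_comp_map_terminal_from :
    frobeniusSection adjD hover frob B ≫ L.map (terminal.from _) = B.hom := by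
  conv_rhs => rw [← frobeniusSection_comp_map_fst adjD hover frob B]
  congr 2
  exact terminal.hom_ext _ _

lemma liftHom_frobeniusSection_comp_snd :
    liftHom adjD adj hover (frobeniusSection adjD hover frob B)
        (frobeniusSection_comp_map_terminal_from adjD hover frob B) ≫
      pullback.snd _ _ ≫ R.map B.hom = terminal.from _ ≫ adj.unit.app (⊤_ (Over X)) := by
  obtain ⟨j, hj_fst, hj_snd⟩ : ∃ j : pullback (point adjD adj hover)
      (R.map (B.hom ≫ comparison adjD adj hover)) ⟶
        pullback (point adjD adj hover) (R.map (comparison adjD adj hover)),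
      j ≫ pullback.fst _ _ = pullback.fst _ _ ∧
        j ≫ pullback.snd _ _ = pullback.snd _ _ ≫ R.map B.hom :=
    ⟨pullback.lift _ _ (by rw [pullback.condition, Category.assoc, R.map_comp]),
      pullback.lift_fst .., pullback.lift_snd ..⟩
  obtain ⟨n, hn_fst, hn_snd⟩ : ∃ n : ⊤_ (Over X) ⟶
      pullback (point adjD adj hover) (R.map (comparison adjD adj hover)),
      n ≫ pullback.fst _ _ = 𝟙 _ ∧ n ≫ pullback.snd _ _ = adj.unit.app (⊤_ (Over X)) :=
    ⟨pullback.lift _ _ (by simp), pullback.lift_fst .., pullback.lift_snd ..⟩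
  -- Frobenius at `comparison` itself: maps into `L` of this pullback are determined by their
  -- two components.
  have key : frobeniusSection adjD hover frob B ≫ L.map j =
      unitLeft adjD hover frob B ≫ L.map (terminal.from _ ≫ n) := by
    rw [L.map_comp, reassoc_of% unitLeft_comp_map_terminal_from]
    apply frob.hom_ext
    · rw [Category.assoc, Category.assoc, ← L.map_comp, ← L.map_comp, hj_fst, hn_fst, L.map_id,
        Category.comp_id, frobeniusSection_comp_map_fst]
    · rw [Category.assoc, Category.assoc, ← L.map_comp_assoc, ← L.map_comp_assoc, hj_snd, hn_snd,
        L.map_comp, Category.assoc]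
      simp only [Functor.id_obj, Adjunction.counit_naturality,
        reassoc_of% frobeniusSection_comp_map_snd, Adjunction.left_triangle_components,
        Category.comp_id]
  have hlift : liftHom adjD adj hover (frobeniusSection adjD hover frob B)
      (frobeniusSection_comp_map_terminal_from adjD hover frob B) ≫ j = terminal.from _ ≫ n := by
    rw [← liftHom_comp adjD adj hover _ _ j
      (by rw [key]; exact unitLeft_comp_map_comp_terminal_from ..)]
    convert liftHom_unitLeft_comp adjD hover frob (terminal.from _ ≫ n) using 2
  rw [← hj_snd, reassoc_of% hlift, hn_snd]

noncomputable def unitRetractionLeft : L.obj (sliceLeftAdjointObj adjD adj hover B) ⟶ B.left :=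
  L.map (liftHom adjD adj hover (frobeniusSection adjD hover frob B)
      (frobeniusSection_comp_map_terminal_from adjD hover frob B) ≫ pullback.snd _ _) ≫
    adj.counit.app B.left

lemma unitRetractionLeft_comp_hom :
    unitRetractionLeft adjD hover frob B ≫ B.hom = L.map (terminal.from _) := by
  rw [unitRetractionLeft, Category.assoc, ← adj.counit_naturality, ← L.map_comp_assoc,
    Category.assoc, liftHom_frobeniusSection_comp_snd, L.map_comp, Category.assoc,
    adj.left_triangle_components, Category.comp_id]

lemma unitLeft_comp_unitRetractionLeft :
    unitLeft adjD hover frob B ≫ unitRetractionLeft adjD hover frob B = 𝟙 B.left := by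
  rw [unitRetractionLeft, L.map_comp, Category.assoc, reassoc_of% unitLeft_comp_map_liftHom,
    frobeniusSection_comp_map_snd]

lemma isIso_sliceAdjunction_unit_app :
    IsIso ((sliceAdjunction adjD hover frob).unit.app B) := by
  have := isIso_sliceAdjunction_counit_app adjD hover frob
  have : IsIso (sliceAdjunction adjD hover frob).counit := NatIso.isIso_of_isIso_app _
  have := (sliceAdjunction adjD hover frob).fullyFaithfulROfIsIsoCounit.full
  refine Adjunction.isIso_unit_app_of_retraction _
    (Over.homMk (unitRetractionLeft adjD hover frob B) (unitRetractionLeft_comp_hom ..)) ?_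
  ext
  rw [Over.comp_left, sliceAdjunction_unit_app_left]
  exact unitLeft_comp_unitRetractionLeft ..

end AdjunctionOver

/-- If `L ⊣ R` (with `L : C/X ⥤ D`) is over `C` (i.e. `Σ_D ∘ L ≅ Σ_X`) and is Frobenius at
`D*(X)`, then the canonical functor `C/X ⥤ D/L(1)` is an equivalence. -/
theorem sliceFunctor_isEquivalence_of_over_of_frobeniusAt
    {C : Type u₁} [Category.{v₁} C] {D : Type u₂} [Category.{v₂} D]
    [HasFiniteLimits C] [HasFiniteLimits D]
    {SigD : D ⥤ C} {Dstar : C ⥤ D} (adjD : SigD ⊣ Dstar) (X : C)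
    {L : Over X ⥤ D} {R : D ⥤ Over X} (adj : L ⊣ R)
    (hover : L ⋙ SigD ≅ Over.forget X)
    (frob : FrobeniusAt adj (Dstar.obj X)) :
    (sliceFunctor L).IsEquivalence :=
  have := AdjunctionOver.isIso_sliceAdjunction_unit_app adjD hover frob
  have := AdjunctionOver.isIso_sliceAdjunction_counit_app adjD hover frob
  (AdjunctionOver.sliceAdjunction adjD hover frob).toEquivalence.isEquivalence_inverse
end

section
/- Let C and D be cartesian categories, let Σ_D ⊣ D* be an adjunction with Σ_D : D ⥤ C, let X be an object of C, and for i = 1, 2 let L_i ⊣ R_i be adjunctions with L_i : C/X ⥤ D that are over C, i.e., equipped with natural isomorphisms τ_i : Σ_D ∘ L_i ≅ Σ_X (Σ_X : C/X ⥤ C the forgetful functor), each Frobenius at the object D*(X) of D. Let ψ_i : L_i(1) ⟶ D*(X) be the adjoint transpose across Σ_D ⊣ D* of the isomorphism (τ_i)_1 : Σ_D(L_i(1)) ≅ X. Then there is a bijection between morphisms from (L_1(1), ψ_1) to (L_2(1), ψ_2) in the slice category D/D*(X) and natural transformations α : L_1 ⟶ L_2 that are over C, i.e., such that (τ_1) =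 (τ_2) ∘ (Σ_D applied to α) as natural transformations Σ_D ∘ L_1 ⟶ Σ_X. -/
/-!
Let `pᵢ : Lᵢ ⟶ Σ_X ⋙ D*` be the adjoint transpose of `τᵢ`; a transformation `α : L₁ ⟶ L₂` is
over `C` exactly when `α ≫ p₂ = p₁`. Through `τ₂` we get `Σ_X ⊣ D* ⋙ R₂`, and the naturality
square of its unit at `A ⟶ 1` exhibits `A` as a pullback of `R₂ D*(A ⟶ X)` along the unit at `1`.
The Frobenius condition carries this square to `D`: `L₂ A` is the pullback of `ψ₂ = p₂ 1` along
`D*(A ⟶ X)`, with projections `L₂ (A ⟶ 1)` and `p₂ A`. So a transformation over `C` is determined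
by its component at `1`, and every `h : (L₁ 1, ψ₁) ⟶ (L₂ 1, ψ₂)` extends to one componentwise by the
universal property of these pullbacks.
-/

open CategoryTheory Limits

universe v₁ v₂ v₃ u₁ u₂ u₃

theorem FrobeniusAt.isPullback_map {E : Type u₁} [Category.{v₁} E] {D : Type u₂}
    [Category.{v₂} D] [HasFiniteLimits E] [HasFiniteLimits D] {L : E ⥤ D} {R : D ⥤ E}
    {adj : L ⊣ R} {X : D} (frob : FrobeniusAt adj X) {P W : E} {Y : D} {fst : P ⟶ W}
    {snd : P ⟶ R.obj Y} {g : W ⟶ R.obj X} {f : Y ⟶ X} (h : IsPullback fst snd g (R.map f)) :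
    IsPullback (L.map fst) (L.map snd ≫ adj.counit.app Y) (L.map g ≫ adj.counit.app X) f := by
  refine .of_iso_pullback ⟨?_⟩ (L.mapIso h.isoPullback ≪≫ @asIso _ _ _ _ _ (frob W g Y f)) ?_ ?_
  · simp only [← L.map_comp_assoc, h.w]
    simp
  · simp only [Iso.trans_hom, Functor.mapIso_hom, asIso_hom, Category.assoc, pullback.lift_fst,
      ← L.map_comp, h.isoPullback_hom_fst]
  · simp only [Iso.trans_hom, Functor.mapIso_hom, asIso_hom, Category.assoc, pullback.lift_snd,
      ← L.map_comp_assoc, h.isoPullback_hom_snd]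

namespace CategoryTheory.Adjunction

theorem isPullback_unit_app {C : Type u₁} [Category.{v₁} C] {X : C} {G : C ⥤ Over X}
    (adj : Over.forget X ⊣ G) (A : Over X) :
    IsPullback (Over.mkIdTerminal.from A) (adj.unit.app A) (adj.unit.app (Over.mk (𝟙 X)))
      (G.map ((Over.forget X).map (Over.mkIdTerminal.from A))) := by
  refine .of_isLimit' ⟨adj.unit.naturality (Over.mkIdTerminal.from A)⟩
    (PullbackCone.IsLimit.mk _
      (fun s => Over.homMk ((adj.homEquiv s.pt ((Over.forget X).obj A)).symm s.snd) ?_)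
      (fun s => Over.mkIdTerminal.hom_ext _ _) (fun s => ?_) (fun s m _ hm => ?_))
  · have h := congrArg (adj.homEquiv _ _).symm s.condition
    rw [adj.homEquiv_naturality_left_symm, adj.homEquiv_naturality_right_symm,
      adj.homEquiv_symm_unit] at h
    simp only [Over.forget_map, Over.mkIdTerminal_from_left] at h
    exact h.symm.trans (by simpa using Over.w s.fst)
  · apply (adj.homEquiv _ _).symm.injective
    rw [adj.homEquiv_naturality_left_symm]
    exact (congrArg _ (adj.homEquiv_symm_unit A)).trans (Category.comp_id _)
  · ext
    have h := congrArg (adj.homEquiv _ _).symm hm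
    rw [adj.homEquiv_naturality_left_symm, adj.homEquiv_symm_unit] at h
    exact (Category.comp_id _).symm.trans h

variable {J : Type u₃} [Category.{v₃} J] {C : Type u₁} [Category.{v₁} C] {D : Type u₂}
  [Category.{v₂} D] {F : D ⥤ C} {G : C ⥤ D} (adj : F ⊣ G) {L : J ⥤ D} {K : J ⥤ C}

def transposeNatTrans (τ : L ⋙ F ⟶ K) : L ⟶ K ⋙ G where
  app A := adj.homEquiv _ _ (τ.app A)
  naturality A B m := by
    rw [← adj.homEquiv_naturality_left, Functor.comp_map, ← adj.homEquiv_naturality_right]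
    exact congrArg _ (τ.naturality m)

theorem transposeNatTrans_injective :
    Function.Injective (adj.transposeNatTrans (L := L) (K := K)) := fun _ _ h => by
  ext A
  exact (adj.homEquiv _ _).injective (NatTrans.congr_app h A)

theorem transposeNatTrans_whiskerRight_comp {L' : J ⥤ D} (α : L' ⟶ L) (τ : L ⋙ F ⟶ K) :
    adj.transposeNatTrans (Functor.whiskerRight α F ≫ τ) = α ≫ adj.transposeNatTrans τ := by
  ext A
  exact adj.homEquiv_naturality_left _ _

end CategoryTheory.Adjunction

namespace CategoryTheory.Limits.IsTerminal

variable {J : Type u₃} [Category.{v₃} J] {D : Type u₂} [Category.{v₂} D] {T : J}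
  (hT : IsTerminal T) {G L₁ L₂ : J ⥤ D} {p₁ : L₁ ⟶ G} {p₂ : L₂ ⟶ G}
  (hp₂ : ∀ A, IsPullback (L₂.map (hT.from A)) (p₂.app A) (p₂.app T) (G.map (hT.from A)))

@[simps]
noncomputable def natTransOfApp (h : L₁.obj T ⟶ L₂.obj T) (hh : h ≫ p₂.app T = p₁.app T) :
    L₁ ⟶ L₂ where
  app A := (hp₂ A).lift (L₁.map (hT.from A) ≫ h) (p₁.app A)
    (by rw [Category.assoc, hh, p₁.naturality])
  naturality A B m := (hp₂ B).hom_ext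
    (by simp [← L₁.map_comp_assoc, ← L₂.map_comp, hT.comp_from])
    (by simp)

theorem natTransOfApp_app_self (h : L₁.obj T ⟶ L₂.obj T) (hh : h ≫ p₂.app T = p₁.app T) :
    (hT.natTransOfApp hp₂ h hh).app T = h :=
  (hp₂ T).hom_ext
    (by rw [natTransOfApp_app, IsPullback.lift_fst, hT.from_self, L₁.map_id, L₂.map_id,
      Category.id_comp, Category.comp_id])
    (by rw [natTransOfApp_app, IsPullback.lift_snd, hh])

theorem eq_natTransOfApp (α : L₁ ⟶ L₂) (hα : α ≫ p₂ = p₁) :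
    α = hT.natTransOfApp hp₂ (α.app T) (NatTrans.congr_app hα T) := by
  ext A
  exact (hp₂ A).hom_ext (by simp [natTransOfApp]) (by simp [natTransOfApp, ← hα])

noncomputable def natTransOverEquiv :
    (Over.mk (p₁.app T) ⟶ Over.mk (p₂.app T)) ≃ {α : L₁ ⟶ L₂ // α ≫ p₂ = p₁} where
  toFun h := ⟨hT.natTransOfApp hp₂ h.left (Over.w h), by ext A; exact (hp₂ A).lift_snd _ _ _⟩
  invFun α := Over.homMk (α.1.app T) (NatTrans.congr_app α.2 T)
  left_inv h := by
    ext
    exact hT.natTransOfApp_app_self hp₂ h.left (Over.w h)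
  right_inv α := Subtype.ext (hT.eq_natTransOfApp hp₂ α.1 α.2).symm

end CategoryTheory.Limits.IsTerminal

theorem FrobeniusAt.isPullback_transposeNatTrans_app {C : Type u₁} [Category.{v₁} C]
    {D : Type u₂} [Category.{v₂} D] [HasFiniteLimits C] [HasFiniteLimits D] {F : D ⥤ C}
    {G : C ⥤ D} (adjD : F ⊣ G) {X : C} {L : Over X ⥤ D} {R : D ⥤ Over X} {adj : L ⊣ R}
    (frob : FrobeniusAt adj (G.obj X)) (τ : L ⋙ F ≅ Over.forget X) (A : Over X) :
    IsPullback (L.map (Over.mkIdTerminal.from A)) ((adjD.transposeNatTrans τ.hom).app A)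
      ((adjD.transposeNatTrans τ.hom).app (Over.mk (𝟙 X)))
      ((Over.forget X ⋙ G).map (Over.mkIdTerminal.from A)) := by
  have counit_unit_eq (B : Over X) :
      L.map (((adj.comp adjD).ofNatIsoLeft τ).unit.app B) ≫ adj.counit.app _ =
        (adjD.transposeNatTrans τ.hom).app B := by
    refine (adj.homEquiv_counit _ _ _).symm.trans ?_
    rw [← Adjunction.homEquiv_id, Adjunction.homEquiv_ofNatIsoLeft_apply,
      Adjunction.comp_homEquiv]
    exact ((adj.homEquiv _ _).symm_apply_apply _).trans (congrArg _ (Category.comp_id _))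
  rw [← counit_unit_eq A, ← counit_unit_eq (Over.mk (𝟙 X))]
  exact frob.isPullback_map (((adj.comp adjD).ofNatIsoLeft τ).isPullback_unit_app A)

theorem hom_equiv_natTrans_over_general
    {C : Type u₁} [Category.{v₁} C] {D : Type u₂} [Category.{v₂} D]
    [HasFiniteLimits C] [HasFiniteLimits D]
    {SigD : D ⥤ C} {Dstar : C ⥤ D} (adjD : SigD ⊣ Dstar) (X : C)
    {L₁ : Over X ⥤ D}
    {L₂ : Over X ⥤ D} {R₂ : D ⥤ Over X} (adj₂ : L₂ ⊣ R₂)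
    (τ₁ : L₁ ⋙ SigD ≅ Over.forget X) (τ₂ : L₂ ⋙ SigD ≅ Over.forget X)
    (frob₂ : FrobeniusAt adj₂ (Dstar.obj X)) :
    Nonempty
      ((Over.mk ((adjD.homEquiv (L₁.obj (Over.mk (𝟙 X))) X) (τ₁.hom.app (Over.mk (𝟙 X)))) ⟶
          Over.mk ((adjD.homEquiv (L₂.obj (Over.mk (𝟙 X))) X) (τ₂.hom.app (Over.mk (𝟙 X))))) ≃
        {α : L₁ ⟶ L₂ // Functor.whiskerRight α SigD ≫ τ₂.hom = τ₁.hom}) :=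
  ⟨(Over.mkIdTerminal.natTransOverEquiv (p₁ := adjD.transposeNatTrans τ₁.hom)
      (frob₂.isPullback_transposeNatTrans_app adjD τ₂)).trans
    (Equiv.subtypeEquivRight fun α => by
      rw [← adjD.transposeNatTrans_whiskerRight_comp, adjD.transposeNatTrans_injective.eq_iff])⟩

/-- Given two adjunctions `L_i ⊣ R_i : C/X ⇄ D` over `C` (via `τ_i : Σ_D ∘ L_i ≅ Σ_X`), each
Frobenius at `D*(X)`, there is a bijection between morphisms `(L₁ 1, ψ₁) ⟶ (L₂ 1, ψ₂)` in
`D/D*(X)` (where `ψ_i` is the adjoint transpose across `Σ_D ⊣ D*` of `(τ_i)_1`) and natural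
transformations `L₁ ⟶ L₂` over `C`. -/
theorem hom_equiv_natTrans_over
    {C : Type u₁} [Category.{v₁} C] {D : Type u₂} [Category.{v₂} D]
    [HasFiniteLimits C] [HasFiniteLimits D]
    {SigD : D ⥤ C} {Dstar : C ⥤ D} (adjD : SigD ⊣ Dstar) (X : C)
    {L₁ : Over X ⥤ D} {R₁ : D ⥤ Over X} (adj₁ : L₁ ⊣ R₁)
    {L₂ : Over X ⥤ D} {R₂ : D ⥤ Over X} (adj₂ : L₂ ⊣ R₂)
    (τ₁ : L₁ ⋙ SigD ≅ Over.forget X) (τ₂ : L₂ ⋙ SigD ≅ Over.forget X)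
    (frob₁ : FrobeniusAt adj₁ (Dstar.obj X)) (frob₂ : FrobeniusAt adj₂ (Dstar.obj X)) :
    Nonempty
      ((Over.mk ((adjD.homEquiv (L₁.obj (Over.mk (𝟙 X))) X) (τ₁.hom.app (Over.mk (𝟙 X)))) ⟶
          Over.mk ((adjD.homEquiv (L₂.obj (Over.mk (𝟙 X))) X) (τ₂.hom.app (Over.mk (𝟙 X))))) ≃
        {α : L₁ ⟶ L₂ // Functor.whiskerRight α SigD ≫ τ₂.hom = τ₁.hom}) :=
  hom_equiv_natTrans_over_general adjD X adj₂ τ₁ τ₂ frob₂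
end

section
/- Let R : C ⥤ D and R' : D ⥤ D' be functors, each possessing a left adjoint. If R' reflects isomorphisms and the composite R' ∘ R : C ⥤ D' is monadic, then R is monadic. -/
open CategoryTheory Limits

universe w w₁ w₂ v v₁ v₂ v₃ u₁ u₂ u₃

/-!
Every `R`-split pair is `(R ⋙ R')`-split, so by the easy half of Beck's theorem `C` has
coequalizers of `R`-split pairs and `R ⋙ R'` preserves them. `R'` preserves the split coequalizer
of the image pair and, since it reflects isomorphisms, also reflects it; hence `R` preserves these
coequalizers. `R` reflects isomorphisms because `R ⋙ R'` does, and Beck's theorem makes `R` monadic.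

The library states Beck's theorem for categories with a common morphism universe, so all three
categories are first replaced by `ULiftHom` copies; this lifting changes neither the
Eilenberg–Moore category nor the comparison functor.
-/

namespace CategoryTheory

section SplitPairs

variable {C : Type u₁} [Category.{v₁} C] {D : Type u₂} [Category.{v₂} D]
  {E : Type u₃} [Category.{v₃} E]

lemma Functor.reflectsIsomorphisms_of_monadicRightAdjoint (R : C ⥤ D) [MonadicRightAdjoint R] :
    R.ReflectsIsomorphisms :=
  reflectsIsomorphisms_of_iso (Monad.comparisonForget (monadicAdjunction R))

instance Functor.isSplitPair_comp (R : C ⥤ D) (R' : D ⥤ E) {A B : C} (f g : A ⟶ B)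
    [R.IsSplitPair f g] : (R ⋙ R').IsSplitPair f g :=
  inferInstanceAs (HasSplitCoequalizer (R'.map (R.map f)) (R'.map (R.map g)))

lemma Functor.hasColimit_parallelPair_comp_of_isSplitPair (G : C ⥤ D) {A B : C} (f g : A ⟶ B)
    [G.IsSplitPair f g] : HasColimit (parallelPair f g ⋙ G) :=
  hasColimit_of_iso (F := parallelPair (G.map f) (G.map g)) (diagramIsoParallelPair _)

lemma Functor.preservesColimit_parallelPair_of_comp_of_isSplitPair (R : C ⥤ D) (R' : D ⥤ E)
    [R'.ReflectsIsomorphisms] {A B : C} (f g : A ⟶ B) [R.IsSplitPair f g]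
    [PreservesColimit (parallelPair f g) (R ⋙ R')] : PreservesColimit (parallelPair f g) R :=
  have : ReflectsColimit (parallelPair (R.map f) (R.map g)) R' :=
    reflectsColimit_of_reflectsIsomorphisms _ _
  have : ReflectsColimit (parallelPair f g ⋙ R) R' :=
    reflectsColimit_of_iso_diagram (K₁ := parallelPair (R.map f) (R.map g)) R'
      (diagramIsoParallelPair (parallelPair f g ⋙ R)).symm
  preservesColimit_of_reflects_of_preserves R R'

end SplitPairs

namespace Monad

variable {C : Type u₁} [Category.{v} C] {D : Type u₂} [Category.{v} D]
  {D' : Type u₃} [Category.{v} D']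

theorem isEquivalence_comparison_of_comp {L : D ⥤ C} {R : C ⥤ D} (adj : L ⊣ R) (R' : D ⥤ D')
    [R'.ReflectsIsomorphisms] [MonadicRightAdjoint (R ⋙ R')] :
    (comparison adj).IsEquivalence := by
  have : (R ⋙ R').ReflectsIsomorphisms := (R ⋙ R').reflectsIsomorphisms_of_monadicRightAdjoint
  have : R.ReflectsIsomorphisms := reflectsIsomorphisms_of_comp R R'
  have : HasCoequalizerOfIsSplitPair R := ⟨fun f g _ =>
    have := createsGSplitCoequalizersOfMonadic (R ⋙ R') f g
    have := (R ⋙ R').hasColimit_parallelPair_comp_of_isSplitPair f g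
    hasColimit_of_created (parallelPair f g) (R ⋙ R')⟩
  have : PreservesColimitOfIsSplitPair R := ⟨fun f g _ =>
    have := createsGSplitCoequalizersOfMonadic (R ⋙ R') f g
    have := (R ⋙ R').hasColimit_parallelPair_comp_of_isSplitPair f g
    R.preservesColimit_parallelPair_of_comp_of_isSplitPair R' f g⟩
  exact (monadicOfHasPreservesGSplitCoequalizersOfReflectsIsomorphisms adj).eqv

end Monad

section ULiftHom

variable {C : Type u₁} [Category.{v₁} C] {D : Type u₂} [Category.{v₂} D]

instance : (ULiftHom.up : C ⥤ ULiftHom.{w} C).IsEquivalence :=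
  ULiftHom.equiv.isEquivalence_functor

instance : (ULiftHom.down : ULiftHom.{w} C ⥤ C).IsEquivalence :=
  ULiftHom.equiv.isEquivalence_inverse

abbrev Functor.uliftHom (F : C ⥤ D) : ULiftHom.{w₁} C ⥤ ULiftHom.{w₂} D :=
  ULiftHom.down ⋙ F ⋙ ULiftHom.up

def Adjunction.uliftHom {L : C ⥤ D} {R : D ⥤ C} (adj : L ⊣ R) :
    L.uliftHom.{w₁, w₂} ⊣ R.uliftHom.{w₂, w₁} where
  unit :=
    { app X := ⟨adj.unit.app X⟩
      naturality _ _ f := congrArg ULift.up (adj.unit.naturality f.down) }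
  counit :=
    { app X := ⟨adj.counit.app X⟩
      naturality _ _ f := congrArg ULift.up (adj.counit.naturality f.down) }
  left_triangle_components X := congrArg ULift.up (adj.left_triangle_components X)
  right_triangle_components X := congrArg ULift.up (adj.right_triangle_components X)

namespace Monad

variable {L : C ⥤ D} {R : D ⥤ C} (adj : L ⊣ R)

def algebraUliftHom : adj.toMonad.Algebra ⥤ adj.uliftHom.{w₁, w₂}.toMonad.Algebra where
  obj A :=
    { A := A.A
      a := ⟨A.a⟩
      unit := congrArg ULift.up A.unit
      assoc := congrArg ULift.up A.assoc }
  map f :=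
    { f := ⟨f.f⟩
      h := congrArg ULift.up f.h }

def algebraUliftHomEquiv : adj.toMonad.Algebra ≌ adj.uliftHom.{w₁, w₂}.toMonad.Algebra where
  functor := algebraUliftHom adj
  inverse :=
    { obj A :=
        { A := A.A
          a := A.a.down
          unit := congrArg ULift.down A.unit
          assoc := congrArg ULift.down A.assoc }
      map f :=
        { f := f.f.down
          h := congrArg ULift.down f.h } }
  unitIso := Iso.refl _
  counitIso := Iso.refl _
  functor_unitIso_comp _ := by ext; exact ULift.ext _ _ (Category.comp_id _)

def comparisonUliftHomIso :
    comparison adj.uliftHom.{w₁, w₂} ≅ (ULiftHom.down ⋙ comparison adj) ⋙ algebraUliftHom adj :=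
  Iso.refl _

theorem isEquivalence_comparison_uliftHom_iff :
    (comparison adj.uliftHom.{w₁, w₂}).IsEquivalence ↔ (comparison adj).IsEquivalence := by
  have : (algebraUliftHom.{w₁, w₂} adj).IsEquivalence :=
    (algebraUliftHomEquiv adj).isEquivalence_functor
  rw [Functor.isEquivalence_iff_of_iso (comparisonUliftHomIso adj)]
  refine ⟨fun _ => ?_, fun _ => inferInstance⟩
  have := Functor.isEquivalence_of_comp_right (ULiftHom.down ⋙ comparison adj) (algebraUliftHom adj)
  exact Functor.isEquivalence_of_comp_left ULiftHom.down (comparison adj)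

end Monad

end ULiftHom

end CategoryTheory

theorem monadic_of_comp_monadic_of_reflectsIsomorphisms_general
    {C : Type u₁} [Category.{v₁} C] {D : Type u₂} [Category.{v₂} D]
    {D' : Type u₃} [Category.{v₃} D']
    (R : C ⥤ D) (R' : D ⥤ D')
    [R.IsRightAdjoint] [R'.ReflectsIsomorphisms]
    [MonadicRightAdjoint (R ⋙ R')] :
    Nonempty (MonadicRightAdjoint R) := by
  let adj := Adjunction.ofIsRightAdjoint R
  -- `(R ⋙ R').uliftHom` is definitionally `R.uliftHom ⋙ R'.uliftHom`, as `up ⋙ down` is `𝟭`.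
  have : MonadicRightAdjoint
      (R.uliftHom.{max v₁ v₂ v₃, max v₁ v₂ v₃} ⋙ R'.uliftHom.{max v₁ v₂ v₃, max v₁ v₂ v₃}) :=
    ⟨_, (monadicAdjunction (R ⋙ R')).uliftHom,
      (Monad.isEquivalence_comparison_uliftHom_iff _).2 inferInstance⟩
  exact ⟨⟨_, adj, (Monad.isEquivalence_comparison_uliftHom_iff adj).1
    (Monad.isEquivalence_comparison_of_comp adj.uliftHom R'.uliftHom)⟩⟩

/-- Monadicity descends: if `R` and `R'` have left adjoints, `R'` reflects isomorphisms, and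
`R' ∘ R` is monadic, then `R` is monadic. -/
theorem monadic_of_comp_monadic_of_reflectsIsomorphisms
    {C : Type u₁} [Category.{v₁} C] {D : Type u₂} [Category.{v₂} D]
    {D' : Type u₃} [Category.{v₃} D']
    (R : C ⥤ D) (R' : D ⥤ D')
    [R.IsRightAdjoint] [R'.IsRightAdjoint] [R'.ReflectsIsomorphisms]
    [MonadicRightAdjoint (R ⋙ R')] :
    Nonempty (MonadicRightAdjoint R) :=
  monadic_of_comp_monadic_of_reflectsIsomorphisms_general R R'
end

section
/- Let C be a cartesian category. Every split epimorphism f : X ⟶ Y in C is an effective descent morphism, i.e., the pullback functor f* : C/Y ⥤ C/X is monadic. -/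
/-!
If `s` is a section of `f`, then `s* ∘ f* ≅ (f ∘ s)* = id`, so `f*` has a retraction up to
isomorphism. Such a functor reflects isomorphisms, and applying the retraction to an `f*`-split
coequalizer yields a split coequalizer of the original pair, which every functor preserves.
Beck's monadicity theorem then applies to the right adjoint `f*`.
-/

open CategoryTheory Limits

universe v₁ v₂ v₃ u₁ u₂ u₃

/-- A morphism `f : X ⟶ Y` of a cartesian category is an effective descent morphism if the
pullback functor `f* : C/Y ⥤ C/X` is monadic. -/
def EffectiveDescentMorphism {C : Type u₁} [Category.{v₁} C] [HasFiniteLimits C]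
    {X Y : C} (f : X ⟶ Y) : Prop :=
  Nonempty (MonadicRightAdjoint (Over.pullback f))

namespace CategoryTheory

def IsSplitCoequalizer.ofNatIso {A : Type u₂} {B : Type u₃} [Category.{v₂} A] [Category.{v₃} B]
    {H K : A ⥤ B} (e : H ≅ K) {M N : A} {u v : M ⟶ N} {Z : B}
    {π : H.obj N ⟶ Z} (q : IsSplitCoequalizer (H.map u) (H.map v) π) :
    IsSplitCoequalizer (K.map u) (K.map v) (e.inv.app N ≫ π) where
  rightSection := q.rightSection ≫ e.hom.app N
  leftSection := e.inv.app N ≫ q.leftSection ≫ e.hom.app M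
  condition := by
    rw [e.inv.naturality_assoc, e.inv.naturality_assoc, q.condition]
  rightSection_π := by
    rw [Category.assoc, Iso.hom_inv_id_app_assoc, q.rightSection_π]
  leftSection_bottom := by
    rw [Category.assoc, Category.assoc, ← e.hom.naturality, q.leftSection_bottom_assoc,
      Iso.inv_hom_id_app]
  leftSection_top := by
    rw [Category.assoc, Category.assoc, ← e.hom.naturality, q.leftSection_top_assoc, Category.assoc]

section CompIsoId

variable {A : Type u₂} {B : Type u₃} [Category.{v₂} A] [Category.{v₂} B] {G : A ⥤ B} {H : B ⥤ A}

lemma Functor.reflectsIsomorphisms_of_comp_iso_id_s9 (e : G ⋙ H ≅ 𝟭 A) : G.ReflectsIsomorphisms :=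
  have : (G ⋙ H).ReflectsIsomorphisms := reflectsIsomorphisms_of_iso e.symm
  reflectsIsomorphisms_of_comp G H

lemma hasSplitCoequalizer_of_isSplitPair_of_comp_iso_id (e : G ⋙ H ≅ 𝟭 A) {M N : A}
    (u v : M ⟶ N) [G.IsSplitPair u v] : HasSplitCoequalizer u v :=
  ⟨_, _, ⟨((HasSplitCoequalizer.isSplitCoequalizer (G.map u) (G.map v)).map H).ofNatIso e⟩⟩

lemma Monad.nonempty_monadicRightAdjoint_of_comp_iso_id (e : G ⋙ H ≅ 𝟭 A) {F : B ⥤ A}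
    (adj : F ⊣ G) : Nonempty (MonadicRightAdjoint G) :=
  have := Functor.reflectsIsomorphisms_of_comp_iso_id_s9 e
  have : Monad.HasCoequalizerOfIsSplitPair G := ⟨fun u v _ =>
    have := hasSplitCoequalizer_of_isSplitPair_of_comp_iso_id e u v
    inferInstance⟩
  have : Monad.PreservesColimitOfIsSplitPair G := ⟨fun u v _ =>
    have := hasSplitCoequalizer_of_isSplitPair_of_comp_iso_id e u v
    inferInstance⟩
  ⟨Monad.monadicOfHasPreservesGSplitCoequalizersOfReflectsIsomorphisms adj⟩

end CompIsoId

noncomputable def Over.pullbackCompPullbackIsoId {C : Type u₁} [Category.{v₁} C] [HasPullbacks C]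
    {X Y : C} {f : X ⟶ Y} {s : Y ⟶ X} (hsf : s ≫ f = 𝟙 Y) :
    Over.pullback f ⋙ Over.pullback s ≅ 𝟭 (Over Y) :=
  (Over.pullbackComp s f).symm ≪≫ eqToIso (by simp only [hsf]) ≪≫ Over.pullbackId

end CategoryTheory

/-- Every split epimorphism in a cartesian category is an effective descent morphism. -/
theorem effectiveDescentMorphism_of_isSplitEpi
    {C : Type u₁} [Category.{v₁} C] [HasFiniteLimits C]
    {X Y : C} (f : X ⟶ Y) (hf : IsSplitEpi f) :
    EffectiveDescentMorphism f := by
  obtain ⟨⟨s, hsf⟩⟩ := hf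
  exact Monad.nonempty_monadicRightAdjoint_of_comp_iso_id (Over.pullbackCompPullbackIsoId hsf)
    (Over.mapPullbackAdj f)
end

section
/- Let C be a cartesian category. Every effective descent morphism f : X ⟶ Y in C is a regular epimorphism. -/
/-!
If `G` is monadic with left adjoint `F`, every counit component `ε_B : F G B ⟶ B` is the
coequalizer of the `G`-split pair `F G ε_B, ε_{F G B}`, since `G` creates such coequalizers.
For `f* : C/Y ⥤ C/X` with left adjoint `Σ_f`, the counit at the terminal object `𝟙 Y` of `C/Y`
is the projection `X ×_Y Y ⟶ Y`, which is `f` up to isomorphism; and the forgetful functor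
`C/Y ⥤ C` preserves coequalizers.
-/

open CategoryTheory Limits

universe v₁ v₂ v₃ u₁ u₂ u₃

namespace CategoryTheory

open CategoryTheory.Monad CategoryTheory.Monad.MonadicityInternal in
noncomputable def Adjunction.regularEpiCounitAppOfMonadic {C : Type u₁} {D : Type u₂}
    [Category.{v₁} C] [Category.{v₁} D] {F : C ⥤ D} {G : D ⥤ C} (adj : F ⊣ G)
    [MonadicRightAdjoint G] (B : D) : RegularEpi (adj.counit.app B) :=
  have : G.IsSplitPair (F.map (G.map (adj.counit.app B))) (adj.counit.app (F.obj (G.obj B))) :=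
    main_pair_G_split adj ((comparison adj).obj B)
  have := createsGSplitCoequalizersOfMonadic G
    (F.map (G.map (adj.counit.app B))) (adj.counit.app (F.obj (G.obj B)))
  Cofork.IsColimit.regularEpi (counitCoequalizerOfReflectsCoequalizer adj B)

noncomputable def RegularEpi.map {C : Type u₁} {D : Type u₂} [Category.{v₁} C]
    [Category.{v₂} D] {X Y : C} {f : X ⟶ Y} (h : RegularEpi f) (F : C ⥤ D)
    [PreservesColimit (parallelPair h.left h.right) F] : RegularEpi (F.map f) :=
  Cofork.IsColimit.regularEpi (isColimitCoforkMapOfIsColimit F h.w h.isColimit)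

end CategoryTheory

/-- Every effective descent morphism in a cartesian category is a regular epimorphism. -/
theorem regularEpi_of_effectiveDescentMorphism
    {C : Type u₁} [Category.{v₁} C] [HasFiniteLimits C]
    {X Y : C} (f : X ⟶ Y) (hf : EffectiveDescentMorphism f) :
    Nonempty (RegularEpi f) := by
  obtain ⟨_⟩ := hf
  have hε : RegularEpi ((Over.mapPullbackAdj f).counit.app (Over.mk (𝟙 Y))).left :=
    ((Over.mapPullbackAdj f).regularEpiCounitAppOfMonadic _).map (Over.forget Y)
  refine ⟨hε.ofArrowIso (Arrow.isoMk (IsPullback.id_vert f).isoPullback (Iso.refl Y) ?_).symm⟩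
  simp [Over.mapPullbackAdj_counit_app]
end

section
/- Let C and D be cartesian categories, let Σ_D ⊣ D* be an adjunction with Σ_D : D ⥤ C, and let L ⊣ R be an adjunction with L : C ⥤ D such that there is a natural isomorphism Σ_D ∘ L ≅ Id_C and such that L ⊣ R satisfies Frobenius reciprocity. If W is an object of D for which the unique morphism !_W : W ⟶ 1 to the terminal object of D is an effective descent morphism, then the unique morphism !_{R W} : R W ⟶ 1 to the terminal object of C is an effective descent morphism. -/
open CategoryTheory Limits

universe v₁ v₂ v₃ u₁ u₂ u₃

/-!
Pulling back along `!_{R W}` and along `!_W` fits into a square with the lift `X ↦ L X` of `L`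
to `C/1 ⥤ D/1` and the lift `(X → R W) ↦ (L X → L R W → W)` of `L` to `C/R W ⥤ D/W`; the
comparison between its two composites is, objectwise, the Frobenius map `L (X × R W) ⟶ L X × W`,
so the square commutes up to isomorphism. Since `Σ_D ∘ L ≅ Id`, the functor `L` is conservative
and its lift to `C/1` has a retraction, the lift of `Σ_D`; both lifts are left adjoints, hence
preserve coequalizers. Beck's theorem now transfers monadicity from `!_W^*` to `!_{R W}^*`: a pair
split by `!_{R W}^*` goes to a pair split by `!_W^*`, whose coequalizer exists and is preserved;
retracting along the lift of `Σ_D` produces the coequalizer in `C/1`, and the conservative lift of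
`L` to `C/R W` detects that `!_{R W}^*` preserves it.
-/

namespace CategoryTheory

section SplitPairs

variable {A B : Type*} [Category* A] [Category* B]

lemma hasSplitCoequalizer_map_of_iso {F₁ F₂ : A ⥤ B} (e : F₁ ≅ F₂) {X Y : A} (f g : X ⟶ Y)
    [HasSplitCoequalizer (F₁.map f) (F₁.map g)] :
    HasSplitCoequalizer (F₂.map f) (F₂.map g) := by
  obtain ⟨Z, π, ⟨q⟩⟩ := HasSplitCoequalizer.splittable (f := F₁.map f) (g := F₁.map g)
  refine ⟨⟨Z, e.inv.app Y ≫ π, ⟨⟨q.rightSection ≫ e.hom.app Y,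
    e.inv.app Y ≫ q.leftSection ≫ e.hom.app X, ?_, ?_, ?_, ?_⟩⟩⟩⟩
  · simpa using q.condition
  · simp
  · rw [Category.assoc, Category.assoc, ← e.hom.naturality g, q.leftSection_bottom_assoc,
      Iso.inv_hom_id_app]
  · rw [Category.assoc, Category.assoc, ← e.hom.naturality f, q.leftSection_top_assoc,
      Category.assoc]

end SplitPairs

section Monadic

variable {A B : Type*} [Category.{v₁} A] [Category.{v₁} B] (G : A ⥤ B) [MonadicRightAdjoint G]

lemma Functor.reflectsIsomorphisms_of_monadicRightAdjoint_s14 : G.ReflectsIsomorphisms :=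
  reflectsIsomorphisms_of_iso (Monad.comparisonForget (monadicAdjunction G))

lemma hasCoequalizer_of_isSplitPair_of_monadic {X Y : A} (f g : X ⟶ Y) [G.IsSplitPair f g] :
    HasCoequalizer f g :=
  have := Monad.createsGSplitCoequalizersOfMonadic G f g
  have : HasColimit (parallelPair f g ⋙ G) :=
    hasColimit_of_iso (F := parallelPair (G.map f) (G.map g)) (diagramIsoParallelPair _)
  hasColimit_of_created (parallelPair f g) G

lemma preservesColimit_parallelPair_of_isSplitPair_of_monadic {X Y : A} (f g : X ⟶ Y)
    [G.IsSplitPair f g] : PreservesColimit (parallelPair f g) G :=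
  have := Monad.createsGSplitCoequalizersOfMonadic G f g
  have : HasColimit (parallelPair f g ⋙ G) :=
    hasColimit_of_iso (F := parallelPair (G.map f) (G.map g)) (diagramIsoParallelPair _)
  inferInstance

end Monadic

section Retraction

variable {A A' : Type*} [Category* A] [Category* A'] {F : A ⥤ A'} {S : A' ⥤ A}

lemma Functor.reflectsIsomorphisms_of_retraction (r : F ⋙ S ≅ 𝟭 A) : F.ReflectsIsomorphisms :=
  have := reflectsIsomorphisms_of_iso r.symm
  reflectsIsomorphisms_of_comp F S

lemma hasColimit_of_retraction (r : F ⋙ S ≅ 𝟭 A) {J : Type*} [Category* J] (K : J ⥤ A)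
    [HasColimit (K ⋙ F)] [PreservesColimit (K ⋙ F) S] : HasColimit K :=
  hasColimit_of_iso (Functor.associator K F S ≪≫ Functor.isoWhiskerLeft K r ≪≫ K.rightUnitor).symm

end Retraction

section MonadicityTransfer

variable {A B A' B' : Type*} [Category.{v₁} A] [Category.{v₁} B] [Category.{v₂} A']
  [Category.{v₂} B'] {G : A ⥤ B} {G' : A' ⥤ B'} {F : A ⥤ A'} {H : B ⥤ B'} {S : A' ⥤ A}

lemma isSplitPair_map_of_iso (e : G ⋙ H ≅ F ⋙ G') {X Y : A} (f g : X ⟶ Y)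
    [G.IsSplitPair f g] : G'.IsSplitPair (F.map f) (F.map g) :=
  have : HasSplitCoequalizer ((G ⋙ H).map f) ((G ⋙ H).map g) :=
    inferInstanceAs (HasSplitCoequalizer (H.map (G.map f)) (H.map (G.map g)))
  hasSplitCoequalizer_map_of_iso e f g

lemma hasCoequalizer_of_iso_of_retraction [MonadicRightAdjoint G']
    [PreservesColimitsOfShape WalkingParallelPair S] (e : G ⋙ H ≅ F ⋙ G') (r : F ⋙ S ≅ 𝟭 A)
    {X Y : A} (f g : X ⟶ Y) [G.IsSplitPair f g] : HasCoequalizer f g :=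
  have := isSplitPair_map_of_iso e f g
  have := hasCoequalizer_of_isSplitPair_of_monadic G' (F.map f) (F.map g)
  have : HasColimit (parallelPair f g ⋙ F) :=
    hasColimit_of_iso (F := parallelPair (F.map f) (F.map g)) (diagramIsoParallelPair _)
  hasColimit_of_retraction r _

lemma preservesColimit_parallelPair_of_iso [MonadicRightAdjoint G'] [H.ReflectsIsomorphisms]
    [PreservesColimitsOfShape WalkingParallelPair F] (e : G ⋙ H ≅ F ⋙ G') {X Y : A}
    (f g : X ⟶ Y) [G.IsSplitPair f g] : PreservesColimit (parallelPair f g) G := by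
  have := isSplitPair_map_of_iso e f g
  have := preservesColimit_parallelPair_of_isSplitPair_of_monadic G' (F.map f) (F.map g)
  have : PreservesColimit (parallelPair f g ⋙ F) G' :=
    preservesColimit_of_iso_diagram G' (K₁ := parallelPair (F.map f) (F.map g))
      (diagramIsoParallelPair (parallelPair f g ⋙ F)).symm
  have : PreservesColimit (parallelPair f g) (G ⋙ H) := preservesColimit_of_natIso _ e.symm
  have : HasColimit (parallelPair f g ⋙ G) :=
    hasColimit_of_iso (F := parallelPair (G.map f) (G.map g)) (diagramIsoParallelPair _)
  have : PreservesColimit (parallelPair f g ⋙ G) H :=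
    preservesColimit_of_iso_diagram H (K₁ := parallelPair (G.map f) (G.map g))
      (diagramIsoParallelPair (parallelPair f g ⋙ G)).symm
  have := reflectsColimit_of_reflectsIsomorphisms (parallelPair f g ⋙ G) H
  exact preservesColimit_of_reflects_of_preserves G H

@[reducible]
def monadicOfIsoOfRetraction {K : B ⥤ A} (adj : K ⊣ G) [MonadicRightAdjoint G']
    [H.ReflectsIsomorphisms] [PreservesColimitsOfShape WalkingParallelPair F]
    [PreservesColimitsOfShape WalkingParallelPair S]
    (e : G ⋙ H ≅ F ⋙ G') (r : F ⋙ S ≅ 𝟭 A) : MonadicRightAdjoint G :=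
  have := Functor.reflectsIsomorphisms_of_monadicRightAdjoint_s14 G'
  have := Functor.reflectsIsomorphisms_of_retraction r
  have : G.ReflectsIsomorphisms :=
    have := reflectsIsomorphisms_of_iso e.symm
    reflectsIsomorphisms_of_comp G H
  have : Monad.HasCoequalizerOfIsSplitPair G :=
    ⟨fun f g _ => hasCoequalizer_of_iso_of_retraction e r f g⟩
  have : Monad.PreservesColimitOfIsSplitPair G :=
    ⟨fun f g _ => preservesColimit_parallelPair_of_iso e f g⟩
  Monad.monadicOfHasPreservesGSplitCoequalizersOfReflectsIsomorphisms adj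

end MonadicityTransfer

section Cartesian

variable {C : Type u₁} [Category.{v₁} C] {D : Type u₂} [Category.{v₂} D]

lemma isIso_pullback_lift_iff_isIso_prod_lift [HasFiniteLimits C] {T X Y : C}
    {f : X ⟶ ⊤_ C} {g : Y ⟶ ⊤_ C} (a : T ⟶ X) (b : T ⟶ Y) :
    IsIso (pullback.lift a b (Subsingleton.elim (a ≫ f) (b ≫ g))) ↔ IsIso (prod.lift a b) := by
  obtain rfl := Subsingleton.elim f (terminal.from X)
  obtain rfl := Subsingleton.elim g (terminal.from Y)
  have : pullback.lift a b (Subsingleton.elim _ _) =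
      prod.lift a b ≫ (prodIsoPullback X Y).hom := by
    apply pullback.hom_ext <;>
      simp only [pullback.lift_fst, pullback.lift_snd, Category.assoc, prodIsoPullback_hom_fst,
        prodIsoPullback_hom_snd, prod.lift_fst, prod.lift_snd]
  rw [this, isIso_comp_right_iff]

noncomputable def Over.terminalPost [HasTerminal C] [HasTerminal D] (F : C ⥤ D) :
    Over (⊤_ C) ⥤ Over (⊤_ D) :=
  Over.post F ⋙ Over.map (terminal.from _)

instance [HasFiniteLimits C] [HasFiniteLimits D] (F : C ⥤ D) [F.IsLeftAdjoint] :
    (Over.terminalPost F).IsLeftAdjoint :=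
  inferInstanceAs (Over.post F ⋙ Over.map _).IsLeftAdjoint

lemma Over.reflectsIsomorphisms_post_comp_map (F : C ⥤ D) [F.ReflectsIsomorphisms] {X : C}
    {Y : D} (f : F.obj X ⟶ Y) : (Over.post F ⋙ Over.map f).ReflectsIsomorphisms :=
  have : ((Over.post F ⋙ Over.map f) ⋙ Over.forget Y).ReflectsIsomorphisms :=
    inferInstanceAs (Over.forget X ⋙ F).ReflectsIsomorphisms
  reflectsIsomorphisms_of_comp _ (Over.forget Y)

noncomputable def Over.terminalPostCompIsoId [HasTerminal C] [HasTerminal D] {F : C ⥤ D}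
    {G : D ⥤ C} (e : F ⋙ G ≅ 𝟭 C) : Over.terminalPost F ⋙ Over.terminalPost G ≅ 𝟭 _ :=
  NatIso.ofComponents (fun x => Over.isoMk (e.app x.left) (Subsingleton.elim _ _))
    (fun u => by ext; exact e.hom.naturality u.left)

variable [HasFiniteLimits C] [HasFiniteLimits D] {L : C ⥤ D} {R : D ⥤ C}

noncomputable def frobeniusPullbackMap (adj : L ⊣ R) (W : D) (x : Over (⊤_ C)) :
    L.obj (pullback x.hom (terminal.from (R.obj W))) ⟶
      pullback (L.map x.hom ≫ terminal.from (L.obj (⊤_ C))) (terminal.from W) :=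
  pullback.lift (L.map (pullback.fst _ _)) (L.map (pullback.snd _ _) ≫ adj.counit.app W)
    (Subsingleton.elim _ _)

noncomputable def frobeniusComparison (adj : L ⊣ R) (W : D) :
    Over.pullback (terminal.from (R.obj W)) ⋙ Over.post L ⋙ Over.map (adj.counit.app W) ⟶
      Over.terminalPost L ⋙ Over.pullback (terminal.from W) where
  app x := Over.homMk (frobeniusPullbackMap adj W x) (pullback.lift_snd _ _ _)
  naturality x y u := by
    ext
    -- restated with the pullbacks in the form of `frobeniusPullbackMap`, where `simp` can see them
    show L.map (pullback.lift (pullback.fst _ _ ≫ u.left) (pullback.snd _ _) _) ≫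
        frobeniusPullbackMap adj W y =
      frobeniusPullbackMap adj W x ≫
        pullback.lift (pullback.fst _ _ ≫ L.map u.left) (pullback.snd _ _) (Subsingleton.elim _ _)
    apply pullback.hom_ext
    · simp only [frobeniusPullbackMap, Category.assoc, pullback.lift_fst, pullback.lift_fst_assoc,
        ← L.map_comp]
    · simp only [frobeniusPullbackMap, Category.assoc, pullback.lift_snd, ← L.map_comp_assoc]

lemma isIso_frobeniusPullbackMap (adj : L ⊣ R) (frob : FrobeniusReciprocity adj) (W : D)
    (x : Over (⊤_ C)) : IsIso (frobeniusPullbackMap adj W x) := by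
  have : IsIso (prod.lift (pullback.fst x.hom (terminal.from (R.obj W))) (pullback.snd _ _)) := by
    rw [← isIso_pullback_lift_iff_isIso_prod_lift, pullback.lift_fst_snd]
    infer_instance
  have hfrob := frob x.left W
  dsimp only [Functor.id_obj] at hfrob
  rw [frobeniusPullbackMap, isIso_pullback_lift_iff_isIso_prod_lift]
  -- the ascriptions replace the codomain `(𝟭 D).obj W` of the counit by `W`, as in the goal
  have h : (prod.lift (L.map (pullback.fst x.hom (terminal.from (R.obj W))))
      (L.map (pullback.snd _ _) ≫ adj.counit.app W) : _ ⟶ L.obj x.left ⨯ W) =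
      L.map (prod.lift (pullback.fst _ _) (pullback.snd _ _)) ≫
        (prod.lift (L.map prod.fst) (L.map prod.snd ≫ adj.counit.app W) :
          _ ⟶ L.obj x.left ⨯ W) := by
    ext
    · simp only [Category.assoc, prod.lift_fst, ← L.map_comp]
    · simp only [Category.assoc, prod.lift_snd, ← L.map_comp_assoc]
  rw [h]
  infer_instance

noncomputable def frobeniusComparisonIso (adj : L ⊣ R) (frob : FrobeniusReciprocity adj)
    (W : D) :
    Over.pullback (terminal.from (R.obj W)) ⋙ Over.post L ⋙ Over.map (adj.counit.app W) ≅
      Over.terminalPost L ⋙ Over.pullback (terminal.from W) :=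
  have (x : Over (⊤_ C)) : IsIso ((frobeniusComparison adj W).app x) :=
    have : IsIso ((Over.forget W).map ((frobeniusComparison adj W).app x)) :=
      isIso_frobeniusPullbackMap adj frob W x
    isIso_of_reflects_iso _ (Over.forget W)
  have := NatIso.isIso_of_isIso_app (frobeniusComparison adj W)
  asIso (frobeniusComparison adj W)

end Cartesian

end CategoryTheory

/-- If `L ⊣ R` (with `L : C ⥤ D`) is split by `Σ_D ⊣ D*` (i.e. `Σ_D ∘ L ≅ Id_C`) and satisfies
Frobenius reciprocity, and `!_W : W ⟶ 1` is an effective descent morphism in `D`, then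
`!_{R W} : R W ⟶ 1` is an effective descent morphism in `C`. -/
theorem effectiveDescent_of_frobenius_split
    {C : Type u₁} [Category.{v₁} C] {D : Type u₂} [Category.{v₂} D]
    [HasFiniteLimits C] [HasFiniteLimits D]
    {SigD : D ⥤ C} {Dstar : C ⥤ D} (adjD : SigD ⊣ Dstar)
    {L : C ⥤ D} {R : D ⥤ C} (adj : L ⊣ R)
    (splitting : L ⋙ SigD ≅ 𝟭 C) (frob : FrobeniusReciprocity adj)
    (W : D) (hW : EffectiveDescentMorphism (terminal.from W)) :
    EffectiveDescentMorphism (terminal.from (R.obj W)) := by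
  obtain ⟨hW⟩ := hW
  have := adj.isLeftAdjoint
  have := adjD.isLeftAdjoint
  have := Functor.reflectsIsomorphisms_of_retraction splitting
  have := Over.reflectsIsomorphisms_post_comp_map L (adj.counit.app W)
  exact ⟨monadicOfIsoOfRetraction (Over.mapPullbackAdj _) (frobeniusComparisonIso adj frob W)
    (Over.terminalPostCompIsoId splitting)⟩
end

section
/- Let C be a cartesian category and let X and Y be objects of C. If the unique morphism !_X : X ⟶ 1 to the terminal object and the projection π₂ : Y × X ⟶ X are both effective descent morphisms, then the unique morphism !_{Y × X} : Y × X ⟶ 1 is an effective descent morphism. -/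
open CategoryTheory Limits

universe v₁ v₂ v₃ u₁ u₂ u₃

/-!
Write `g = !_X` and `f = π₂`, so that `!_{Y × X} = f ≫ g` and its pullback functor is
`g* ⋙ f*`. Since `π₂` is the base change of `!_Y` along `g`, Beck–Chevalley gives
`T ⋙ f* ≅ f* ⋙ T'` for the monads `T = g* Σ_g` and `T' = π₁* Σ_{π₁}`. Hence `T` sends
`f*`-split pairs to `f*`-split pairs and, since `f*` creates their coequalizers, preserves those
coequalizers. By Beck's theorem this is what `g*` needs to create the coequalizers of
`(g* ⋙ f*)`-split pairs, which makes `g* ⋙ f*` monadic.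
-/

namespace CategoryTheory

section SplitPairs

variable {A : Type u₁} {E : Type u₂} [Category.{v₁} A] [Category.{v₂} E]

lemma Functor.isSplitPair_of_iso {F G : A ⥤ E} (i : F ≅ G) {a b : A} (u v : a ⟶ b)
    [F.IsSplitPair u v] : G.IsSplitPair u v := by
  obtain q := HasSplitCoequalizer.isSplitCoequalizer (F.map u) (F.map v)
  refine ⟨_, i.inv.app b ≫ HasSplitCoequalizer.coequalizerπ (F.map u) (F.map v), ⟨?_⟩⟩
  exact
    { rightSection := q.rightSection ≫ i.hom.app b
      leftSection := i.inv.app b ≫ q.leftSection ≫ i.hom.app a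
      condition := by
        rw [← NatIso.naturality_1 i u, ← NatIso.naturality_1 i v]
        simp [q.condition]
      rightSection_π := by simp
      leftSection_bottom := by
        simp only [Category.assoc]
        rw [← i.hom.naturality v, q.leftSection_bottom_assoc, Iso.inv_hom_id_app]
      leftSection_top := by
        simp only [Category.assoc]
        rw [← i.hom.naturality u, q.leftSection_top_assoc] }

lemma Functor.isSplitPair_map_of_iso_comp (F : A ⥤ E) {T : A ⥤ A} {T' : E ⥤ E}
    (e : T ⋙ F ≅ F ⋙ T') {a b : A} (u v : a ⟶ b) [F.IsSplitPair u v] :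
    F.IsSplitPair (T.map u) (T.map v) :=
  have : (F ⋙ T').IsSplitPair u v :=
    inferInstanceAs (HasSplitCoequalizer (T'.map (F.map u)) (T'.map (F.map v)))
  isSplitPair_of_iso e.symm u v

def parallelPairCompIso (F : A ⥤ E) {a b : A} (u v : a ⟶ b) :
    parallelPair u v ⋙ F ≅ parallelPair (F.map u) (F.map v) :=
  parallelPair.ext (Iso.refl _) (Iso.refl _) (by simp) (by simp)

lemma hasColimit_parallelPair_comp (F : A ⥤ E) {a b : A} (u v : a ⟶ b)
    [HasCoequalizer (F.map u) (F.map v)] : HasColimit (parallelPair u v ⋙ F) :=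
  hasColimit_of_iso (parallelPairCompIso F u v)

end SplitPairs

section Monadic

variable {A : Type u₁} {E : Type u₂} [Category.{v₁} A] [Category.{v₁} E]

instance MonadicRightAdjoint.reflectsIsomorphisms (F : A ⥤ E) [MonadicRightAdjoint F] :
    F.ReflectsIsomorphisms :=
  reflectsIsomorphisms_of_iso (Monad.comparisonForget (monadicAdjunction F))

variable (F : A ⥤ E) [MonadicRightAdjoint F] {a b : A}

lemma MonadicRightAdjoint.hasCoequalizer_of_isSplitPair (u v : a ⟶ b) [F.IsSplitPair u v] :
    HasCoequalizer u v :=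
  have := Monad.createsGSplitCoequalizersOfMonadic F u v
  have := hasColimit_parallelPair_comp F u v
  hasColimit_of_created _ F

lemma MonadicRightAdjoint.preservesCoequalizer_of_isSplitPair (u v : a ⟶ b)
    [F.IsSplitPair u v] : PreservesColimit (parallelPair u v) F :=
  have := Monad.createsGSplitCoequalizersOfMonadic F u v
  have := hasColimit_parallelPair_comp F u v
  inferInstance

lemma MonadicRightAdjoint.reflectsCoequalizer_of_isSplitPair (u v : a ⟶ b)
    [F.IsSplitPair u v] : ReflectsColimit (parallelPair u v) F :=
  have := Monad.createsGSplitCoequalizersOfMonadic F u v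
  inferInstance

lemma MonadicRightAdjoint.preservesCoequalizer_of_iso_comp {T : A ⥤ A} {T' : E ⥤ E}
    (e : T ⋙ F ≅ F ⋙ T') (u v : a ⟶ b) [F.IsSplitPair u v] :
    PreservesColimit (parallelPair u v) T := by
  have := preservesCoequalizer_of_isSplitPair F u v
  have : PreservesColimit (parallelPair u v ⋙ F) T' :=
    preservesColimit_of_iso_diagram T' (parallelPairCompIso F u v).symm
  have : PreservesColimit (parallelPair u v) (T ⋙ F) := preservesColimit_of_natIso _ e.symm
  have := F.isSplitPair_map_of_iso_comp e u v
  have := reflectsCoequalizer_of_isSplitPair F (T.map u) (T.map v)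
  have : ReflectsColimit (parallelPair u v ⋙ T) F :=
    reflectsColimit_of_iso_diagram F (parallelPairCompIso T u v).symm
  exact preservesColimit_of_reflects_of_preserves T F

end Monadic

section MonadicConstructions

variable {A : Type u₁} {B : Type u₂} {E : Type u₃}
  [Category.{v₁} A] [Category.{v₁} B] [Category.{v₁} E]

open MonadicRightAdjoint in
@[reducible]
noncomputable def MonadicRightAdjoint.ofIso {R R' : B ⥤ E} (i : R ≅ R')
    [MonadicRightAdjoint R] : MonadicRightAdjoint R' := by
  have := reflectsIsomorphisms_of_iso i
  have key : ∀ {b₁ b₂ : B} (u v : b₁ ⟶ b₂), R'.IsSplitPair u v →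
      HasCoequalizer u v ∧ PreservesColimit (parallelPair u v) R' := by
    intro b₁ b₂ u v _
    have := Functor.isSplitPair_of_iso i.symm u v
    have := preservesCoequalizer_of_isSplitPair R u v
    exact ⟨hasCoequalizer_of_isSplitPair R u v, preservesColimit_of_natIso _ i⟩
  have : Monad.HasCoequalizerOfIsSplitPair R' := ⟨fun u v h => (key u v h).1⟩
  have : Monad.PreservesColimitOfIsSplitPair R' := ⟨fun u v h => (key u v h).2⟩
  exact Monad.monadicOfHasPreservesGSplitCoequalizersOfReflectsIsomorphisms
    ((monadicAdjunction R).ofNatIsoRight i)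

open MonadicRightAdjoint in
@[reducible]
noncomputable def MonadicRightAdjoint.comp {G : B ⥤ A} {F : A ⥤ E} [MonadicRightAdjoint G]
    [MonadicRightAdjoint F] {L : A ⥤ B} (adj : L ⊣ G) {T' : E ⥤ E}
    (e : (L ⋙ G) ⋙ F ≅ F ⋙ T') :
    MonadicRightAdjoint (G ⋙ F) := by
  let T := monadicLeftAdjoint G ⋙ G
  have eT : T ⋙ F ≅ F ⋙ T' :=
    Functor.isoWhiskerRight (Functor.isoWhiskerRight
      ((monadicAdjunction G).leftAdjointUniq adj) G) F ≪≫ e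
  have key : ∀ {b₁ b₂ : B} (u v : b₁ ⟶ b₂), (G ⋙ F).IsSplitPair u v →
      HasCoequalizer u v ∧ PreservesColimit (parallelPair u v) (G ⋙ F) := by
    intro b₁ b₂ u v (_ : F.IsSplitPair (G.map u) (G.map v))
    have := F.isSplitPair_map_of_iso_comp eT (G.map u) (G.map v)
    -- the two hypotheses of `monadicCreatesColimitOfPreservesColimit`, up to diagram isos
    have := preservesCoequalizer_of_iso_comp F eT (G.map u) (G.map v)
    have := preservesCoequalizer_of_iso_comp F eT (T.map (G.map u)) (T.map (G.map v))
    have : PreservesColimit (parallelPair u v ⋙ G) T :=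
      preservesColimit_of_iso_diagram T (parallelPairCompIso G u v).symm
    have : PreservesColimit ((parallelPair u v ⋙ G) ⋙ T) T :=
      preservesColimit_of_iso_diagram T
        (Functor.isoWhiskerRight (parallelPairCompIso G u v) T ≪≫ parallelPairCompIso T _ _).symm
    have := monadicCreatesColimitOfPreservesColimit G (parallelPair u v)
    have := hasCoequalizer_of_isSplitPair F (G.map u) (G.map v)
    have := hasColimit_parallelPair_comp G u v
    have := preservesCoequalizer_of_isSplitPair F (G.map u) (G.map v)
    have : PreservesColimit (parallelPair u v ⋙ G) F :=
      preservesColimit_of_iso_diagram F (parallelPairCompIso G u v).symm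
    exact ⟨hasColimit_of_created _ G, inferInstance⟩
  have : Monad.HasCoequalizerOfIsSplitPair (G ⋙ F) := ⟨fun u v h => (key u v h).1⟩
  have : Monad.PreservesColimitOfIsSplitPair (G ⋙ F) := ⟨fun u v h => (key u v h).2⟩
  exact Monad.monadicOfHasPreservesGSplitCoequalizersOfReflectsIsomorphisms
    ((monadicAdjunction F).comp adj)

end MonadicConstructions

section OverPullback

variable {C : Type u₁} [Category.{v₁} C] [HasPullbacks C]
  {P X Y Z : C} {fst : P ⟶ Y} {snd : P ⟶ X} {h : Y ⟶ Z} {g : X ⟶ Z}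

noncomputable def IsPullback.pullbackMapIso (sq : IsPullback fst snd h g) :
    Over.pullback snd ⋙ Over.map fst ≅ Over.map g ⋙ Over.pullback h :=
  NatIso.ofComponents
    (fun A => Over.isoMk
      ((IsPullback.of_hasPullback A.hom snd).paste_vert sq.flip).isoPullback (by simp))
    (fun {A B} φ => by
      ext
      -- `((Over.map g).obj B).hom` is `B.hom ≫ g` only up to defeq, hence the `erw`s
      apply pullback.hom_ext
      · simp only [Functor.comp_obj, Over.map_obj_left, Over.pullback_obj_left, Over.map_obj_hom,
          Functor.comp_map, Over.comp_left, Over.map_map_left, Over.pullback_map_left,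
          Over.isoMk_hom_left, Category.assoc, IsPullback.isoPullback_hom_fst]
        erw [pullback.lift_fst, pullback.lift_fst]
        simp
      · simp only [Functor.comp_obj, Over.map_obj_left, Over.pullback_obj_left, Over.map_obj_hom,
          Functor.comp_map, Over.comp_left, Over.map_map_left, Over.pullback_map_left,
          Over.isoMk_hom_left, Category.assoc, IsPullback.isoPullback_hom_snd]
        erw [pullback.lift_snd_assoc, pullback.lift_snd]
        simp)

noncomputable def IsPullback.mapPullbackCompPullbackIso (sq : IsPullback fst snd h g) :
    (Over.map g ⋙ Over.pullback g) ⋙ Over.pullback snd ≅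
      Over.pullback snd ⋙ Over.map fst ⋙ Over.pullback fst :=
  Functor.associator _ _ _ ≪≫
    Functor.isoWhiskerLeft (Over.map g) ((Over.pullbackComp snd g).symm ≪≫
      eqToIso (by congr 1; exact sq.w.symm) ≪≫ Over.pullbackComp fst h) ≪≫
    (Functor.associator _ _ _).symm ≪≫
    Functor.isoWhiskerRight sq.pullbackMapIso.symm (Over.pullback fst) ≪≫
    Functor.associator _ _ _

end OverPullback

theorem EffectiveDescentMorphism.comp_of_isPullback {C : Type u₁} [Category.{v₁} C]
    [HasFiniteLimits C] {P X Y Z : C} {fst : P ⟶ Y} {snd : P ⟶ X} {h : Y ⟶ Z} {g : X ⟶ Z}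
    (sq : IsPullback fst snd h g) (hg : EffectiveDescentMorphism g)
    (hsnd : EffectiveDescentMorphism snd) : EffectiveDescentMorphism (snd ≫ g) := by
  obtain ⟨_⟩ := hg
  obtain ⟨_⟩ := hsnd
  have := MonadicRightAdjoint.comp (Over.mapPullbackAdj g) sq.mapPullbackCompPullbackIso
  exact ⟨MonadicRightAdjoint.ofIso (Over.pullbackComp snd g).symm⟩

end CategoryTheory

/-- If `!_X : X ⟶ 1` and the projection `π₂ : Y ⨯ X ⟶ X` are effective descent morphisms, then
`!_{Y ⨯ X} : Y ⨯ X ⟶ 1` is an effective descent morphism. -/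
theorem effectiveDescent_prod
    {C : Type u₁} [Category.{v₁} C] [HasFiniteLimits C] (X Y : C)
    (hX : EffectiveDescentMorphism (terminal.from X))
    (hsnd : EffectiveDescentMorphism (prod.snd : Y ⨯ X ⟶ X)) :
    EffectiveDescentMorphism (terminal.from (Y ⨯ X)) := by
  rw [← terminal.comp_from (prod.snd : Y ⨯ X ⟶ X)]
  exact EffectiveDescentMorphism.comp_of_isPullback (IsPullback.of_hasBinaryProduct' Y X) hX hsnd
end
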